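/- arXiv:2407.06456 — 5 statements merged into one kernel-verified Lean document; each statement's English description precedes it below -/
import Mathlib

section
/- Let μ = ∫ μ_ω dν(ω) be a mixture over an ergodic shift-invariant ν, with equivariant kernel, such that for all bounded measurable f, g depending on finitely many coordinates and all sufficiently large k: ∫ f·(g∘S^k) dμ_ω = (∫ f dμ_ω)·(∫ g∘S^k dμ_ω). Then (1/n) Σ_{k<n} ∫ f·(g∘S^k) dμ → (∫ f dμ)(∫ g dμ) for all such f, g. -/
/-!
Write `F ω = ∫ f dμ_ω` and `G ω = ∫ g dμ_ω`. Beyond the factorization threshold,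
`∫ f·(g∘S^k) dμ = ∫ F ω · (∫ g∘S^k dμ_ω) dν(ω)`; substituting `ω ↦ T^k ω` (`ν` is `T`-invariant)
and using the iterated equivariance `∫ g∘S^k dμ_{T^k ω} = G ω` turns this into the correlation
`∫ G·(F∘T^k) dν`. Its Cesàro means converge to `(∫ G dν)(∫ F dν)` by von Neumann's mean ergodic
theorem, because for ergodic `T` the Koopman-invariant vectors of `L²(ν)` are the constants; the
finitely many terms below the threshold do not affect Cesàro limits.
-/

open MeasureTheory Filter Function ProbabilityTheory Finset
open scoped RealInnerProductSpace Topology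

lemma tendsto_cesaro_congr {a b : ℕ → ℝ} (hab : a =ᶠ[atTop] b) {l : ℝ}
    (hb : Tendsto (fun n : ℕ => (1 / (n : ℝ)) * ∑ k ∈ range n, b k) atTop (𝓝 l)) :
    Tendsto (fun n : ℕ => (1 / (n : ℝ)) * ∑ k ∈ range n, a k) atTop (𝓝 l) := by
  obtain ⟨K, hK⟩ := eventually_atTop.1 hab
  have hhead : Tendsto (fun n : ℕ => (1 / (n : ℝ)) * ∑ k ∈ range K, (a k - b k)) atTop (𝓝 0) := by
    simpa using tendsto_one_div_atTop_nhds_zero_nat.mul_const (∑ k ∈ range K, (a k - b k))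
  refine (add_zero l ▸ hb.add hhead).congr' ?_
  filter_upwards [eventually_ge_atTop K] with n hn
  have htail : ∑ k ∈ range K, (a k - b k) = ∑ k ∈ range n, (a k - b k) :=
    sum_subset (range_subset_range.2 hn) fun k _ hk =>
      sub_eq_zero.2 (hK k (not_lt.1 (mt mem_range.2 hk)))
  rw [htail, sum_sub_distrib]
  ring

namespace MeasureTheory

variable {α : Type*} [MeasurableSpace α] {μ : Measure α}

lemma memLp_of_exists_abs_le [IsFiniteMeasure μ] {p : ENNReal} {h : α → ℝ} (hh : Measurable h)
    (hb : ∃ C, ∀ x, |h x| ≤ C) : MemLp h p μ :=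
  let ⟨C, hC⟩ := hb
  .of_bound hh.aestronglyMeasurable C (ae_of_all _ fun x => (Real.norm_eq_abs _).trans_le (hC x))

lemma Measure.integral_bind {β : Type*} [MeasurableSpace β] {κ : Kernel α β} {h : β → ℝ}
    (hh : Integrable h (μ.bind κ)) :
    ∫ z, h z ∂(μ.bind κ) = ∫ x, ∫ z, h z ∂κ x ∂μ := by
  rw [Measure.comp_eq_comp_const_apply] at hh ⊢
  simpa using Kernel.integral_comp hh

lemma L2.inner_toLp_toLp {F G : α → ℝ} (hF : MemLp F 2 μ) (hG : MemLp G 2 μ) :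
    ⟪hF.toLp F, hG.toLp G⟫ = ∫ x, F x * G x ∂μ := by
  rw [L2.inner_def]
  refine integral_congr_ae ?_
  filter_upwards [hF.coeFn_toLp, hG.coeFn_toLp] with x hFx hGx
  simp [hFx, hGx, mul_comm]

lemma L2.inner_const_one_toLp [IsFiniteMeasure μ] {G : α → ℝ} (hG : MemLp G 2 μ) :
    ⟪Lp.const 2 μ (1 : ℝ), hG.toLp G⟫ = ∫ x, G x ∂μ := by
  simp [← MemLp.toLp_const, L2.inner_toLp_toLp (memLp_const 1) hG]

namespace MeasurePreserving

variable {T : α → α}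

noncomputable def koopman (hT : MeasurePreserving T μ μ) : Lp ℝ 2 μ →L[ℝ] Lp ℝ 2 μ :=
  (Lp.compMeasurePreservingₗᵢ ℝ T hT).toContinuousLinearMap

lemma norm_koopman_le (hT : MeasurePreserving T μ μ) : ‖hT.koopman‖ ≤ 1 :=
  LinearIsometry.norm_toContinuousLinearMap_le _

lemma koopman_iterate (hT : MeasurePreserving T μ μ) (k : ℕ) :
    (⇑hT.koopman)^[k] = Lp.compMeasurePreserving (T^[k]) (hT.iterate k) :=
  Lp.compMeasurePreserving_iterate hT k

lemma inner_toLp_koopman_iterate_toLp (hT : MeasurePreserving T μ μ) {F G : α → ℝ}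
    (hF : MemLp F 2 μ) (hG : MemLp G 2 μ) (k : ℕ) :
    ⟪hF.toLp F, (⇑hT.koopman)^[k] (hG.toLp G)⟫ = ∫ x, F x * G (T^[k] x) ∂μ := by
  rw [koopman_iterate, Lp.toLp_compMeasurePreserving, L2.inner_toLp_toLp]
  rfl

end MeasurePreserving

namespace Ergodic

variable [IsProbabilityMeasure μ] {T : α → α}

lemma eqLocus_koopman_eq_span_const (hT : Ergodic T μ) :
    hT.toMeasurePreserving.koopman.eqLocus (1 : Lp ℝ 2 μ →L[ℝ] Lp ℝ 2 μ) =
      ℝ ∙ Lp.const 2 μ (1 : ℝ) := by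
  apply le_antisymm
  · intro φ hφ
    have hfix : Lp.compMeasurePreserving T hT.toMeasurePreserving φ = φ := hφ
    have hφT : φ ∘ T =ᵐ[μ] φ := by
      simpa [hfix] using (Lp.coeFn_compMeasurePreserving φ hT.toMeasurePreserving).symm
    obtain ⟨c, hc⟩ := hT.ae_eq_const_of_ae_eq_comp_ae (Lp.aestronglyMeasurable φ) hφT
    refine Submodule.mem_span_singleton.2 ⟨c, Lp.ext ?_⟩
    filter_upwards [Lp.coeFn_smul c (Lp.const 2 μ (1 : ℝ)), hc] with x hsmul hcx
    simp [hsmul, hcx]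
  · rw [Submodule.span_singleton_le_iff_mem]
    show Lp.compMeasurePreserving T _ (Lp.const 2 μ (1 : ℝ)) = _
    rw [← MemLp.toLp_const, Lp.toLp_compMeasurePreserving]
    rfl

lemma orthogonalProjectionOnto_eqLocus_koopman (hT : Ergodic T μ) (φ : Lp ℝ 2 μ) :
    ((hT.toMeasurePreserving.koopman.eqLocus
        (1 : Lp ℝ 2 μ →L[ℝ] Lp ℝ 2 μ)).orthogonalProjectionOnto φ : Lp ℝ 2 μ) =
      ⟪Lp.const 2 μ (1 : ℝ), φ⟫ • Lp.const 2 μ (1 : ℝ) := by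
  rw [Submodule.coe_orthogonalProjectionOnto_apply]
  have hone : ‖Lp.const 2 μ (1 : ℝ)‖ = 1 := by simp [Lp.norm_const]
  convert Submodule.starProjection_unit_singleton ℝ hone φ using 3
  exact hT.eqLocus_koopman_eq_span_const

theorem tendsto_cesaro_integral_mul_comp_iterate (hT : Ergodic T μ) {F G : α → ℝ}
    (hF : MemLp F 2 μ) (hG : MemLp G 2 μ) :
    Tendsto (fun n : ℕ => (1 / (n : ℝ)) * ∑ k ∈ range n, ∫ x, F x * G (T^[k] x) ∂μ) atTop
      (𝓝 ((∫ x, F x ∂μ) * ∫ x, G x ∂μ)) := by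
  have hmean := hT.toMeasurePreserving.koopman.tendsto_birkhoffAverage_orthogonalProjection
    hT.toMeasurePreserving.norm_koopman_le (hG.toLp G)
  rw [hT.orthogonalProjectionOnto_eqLocus_koopman] at hmean
  convert (tendsto_const_nhds (x := hF.toLp F)).inner (𝕜 := ℝ) hmean using 1
  · ext n
    simp only [birkhoffAverage, birkhoffSum, inner_smul_right, inner_sum, id,
      hT.toMeasurePreserving.inner_toLp_koopman_iterate_toLp hF hG, one_div]
  · rw [real_inner_smul_right, real_inner_comm _ (hF.toLp F), L2.inner_const_one_toLp,
      L2.inner_const_one_toLp, mul_comm]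

end Ergodic

end MeasureTheory

lemma integral_eq_integral_comp_iterate_of_equivariant {α β : Type*} [MeasurableSpace β]
    {T : α → α} {S : β → β} {κ : α → Measure β} (hS : Measurable S)
    (hequiv : ∀ ω (h : β → ℝ), Measurable h → (∃ C, ∀ z, |h z| ≤ C) →
      ∫ z, h z ∂κ ω = ∫ z, h (S z) ∂κ (T ω))
    {h : β → ℝ} (hh : Measurable h) (hb : ∃ C, ∀ z, |h z| ≤ C) (k : ℕ) (ω : α) :
    ∫ z, h z ∂κ ω = ∫ z, h (S^[k] z) ∂κ (T^[k] ω) := by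
  induction k generalizing ω with
  | zero => rfl
  | succ k ih =>
    obtain ⟨C, hC⟩ := hb
    rw [ih, hequiv _ (fun z => h (S^[k] z)) (hh.comp (hS.iterate k)) ⟨C, fun z => hC _⟩,
      ← iterate_succ_apply' T]
    simp only [iterate_succ_apply]

section Mixture

variable {α β : Type*} [MeasurableSpace α] [MeasurableSpace β] {κ : Kernel α β} [IsMarkovKernel κ]

lemma ProbabilityTheory.Kernel.exists_abs_integral_le {h : β → ℝ} (hb : ∃ C, ∀ z, |h z| ≤ C) :
    ∃ C, ∀ ω, |∫ z, h z ∂κ ω| ≤ C := by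
  obtain ⟨C, hC⟩ := hb
  refine ⟨C, fun ω => ?_⟩
  simpa using norm_integral_le_of_norm_le_const (μ := κ ω)
    (ae_of_all _ fun z => (Real.norm_eq_abs _).trans_le (hC z))

lemma integral_bind_mul_comp_iterate_of_equivariant {ν : Measure α} [IsFiniteMeasure ν]
    {T : α → α} {S : β → β} (hT : MeasurePreserving T ν ν) (hS : Measurable S)
    (hequiv : ∀ ω (h : β → ℝ), Measurable h → (∃ C, ∀ z, |h z| ≤ C) →
      ∫ z, h z ∂κ ω = ∫ z, h (S z) ∂κ (T ω))
    {f g : β → ℝ} (hf : Measurable f) (hg : Measurable g)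
    (hfb : ∃ C, ∀ z, |f z| ≤ C) (hgb : ∃ C, ∀ z, |g z| ≤ C) {k : ℕ}
    (hfac : ∀ ω, ∫ z, f z * g (S^[k] z) ∂κ ω = (∫ z, f z ∂κ ω) * ∫ z, g (S^[k] z) ∂κ ω) :
    ∫ z, f z * g (S^[k] z) ∂(ν.bind κ) = ∫ ω, (∫ z, g z ∂κ ω) * ∫ z, f z ∂κ (T^[k] ω) ∂ν := by
  obtain ⟨Cf, hCf⟩ := hfb
  have hgk : Measurable fun z => g (S^[k] z) := hg.comp (hS.iterate k)
  have hfgk : MemLp (fun z => f z * g (S^[k] z)) 1 (ν.bind κ) := by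
    obtain ⟨Cg, hCg⟩ := hgb
    refine memLp_of_exists_abs_le (hf.mul hgk) ⟨Cf * Cg, fun z => ?_⟩
    rw [abs_mul]
    exact mul_le_mul (hCf z) (hCg _) (abs_nonneg _) ((abs_nonneg _).trans (hCf z))
  have hfibre : Measurable fun ω => (∫ z, f z ∂κ ω) * ∫ z, g (S^[k] z) ∂κ ω :=
    hf.stronglyMeasurable.integral_kernel.measurable.mul
      hgk.stronglyMeasurable.integral_kernel.measurable
  calc ∫ z, f z * g (S^[k] z) ∂(ν.bind κ)
      = ∫ ω, (∫ z, f z ∂κ ω) * ∫ z, g (S^[k] z) ∂κ ω ∂ν := by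
        rw [Measure.integral_bind (memLp_one_iff_integrable.1 hfgk)]
        simp_rw [hfac]
    _ = ∫ ω, (∫ z, f z ∂κ (T^[k] ω)) * ∫ z, g (S^[k] z) ∂κ (T^[k] ω) ∂ν := by
        rw [← integral_map (hT.iterate k).measurable.aemeasurable hfibre.aestronglyMeasurable,
          (hT.iterate k).map_eq]
    _ = ∫ ω, (∫ z, g z ∂κ ω) * ∫ z, f z ∂κ (T^[k] ω) ∂ν := by
        simp_rw [← integral_eq_integral_comp_iterate_of_equivariant hS hequiv hg hgb k, mul_comm]

lemma memLp_integral_kernel {ν : Measure α} [IsFiniteMeasure ν] {p : ENNReal} {h : β → ℝ}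
    (hh : Measurable h) (hb : ∃ C, ∀ z, |h z| ≤ C) : MemLp (fun ω => ∫ z, h z ∂κ ω) p ν :=
  memLp_of_exists_abs_le hh.stronglyMeasurable.integral_kernel.measurable
    (Kernel.exists_abs_integral_le hb)

end Mixture

theorem mixture_cesaro_decorrelation_general
    (d : ℕ)
    (ν : Measure (ℤ → (Fin d → ℝ))) [IsProbabilityMeasure ν]
    (T : (ℤ → (Fin d → ℝ)) → (ℤ → (Fin d → ℝ)))
    (S : (ℤ → (Fin d → Set.Ioo (0:ℝ) 1)) → (ℤ → (Fin d → Set.Ioo (0:ℝ) 1)))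
    (hSmeas : Measurable S)
    (herg : Ergodic T ν)
    (κ : (ℤ → (Fin d → ℝ)) → Measure (ℤ → (Fin d → Set.Ioo (0:ℝ) 1)))
    (hprob : ∀ ω, IsProbabilityMeasure (κ ω))
    (hmeas : ∀ s : Set (ℤ → (Fin d → Set.Ioo (0:ℝ) 1)), MeasurableSet s →
      Measurable (fun ω => κ ω s))
    (hequiv : ∀ ω (h : (ℤ → (Fin d → Set.Ioo (0:ℝ) 1)) → ℝ), Measurable h →
      (∃ C : ℝ, ∀ z, |h z| ≤ C) →
      ∫ z, h z ∂(κ ω) = ∫ z, h (S z) ∂(κ (T ω))) :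
    ∀ (f g : (ℤ → (Fin d → Set.Ioo (0:ℝ) 1)) → ℝ),
      Measurable f → Measurable g →
      (∃ C : ℝ, ∀ z, |f z| ≤ C) → (∃ C : ℝ, ∀ z, |g z| ≤ C) →
      (∃ N : ℕ, ∀ x y, (∀ i : ℤ, |i| ≤ (N : ℤ) → x i = y i) → f x = f y) →
      (∃ N : ℕ, ∀ x y, (∀ i : ℤ, |i| ≤ (N : ℤ) → x i = y i) → g x = g y) →
      (∃ K : ℕ, ∀ k ≥ K, ∀ ω,
        ∫ z, f z * g (S^[k] z) ∂(κ ω) =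
          (∫ z, f z ∂(κ ω)) * (∫ z, g (S^[k] z) ∂(κ ω))) →
      Tendsto (fun n : ℕ =>
          (1 / (n : ℝ)) * ∑ k ∈ Finset.range n, ∫ z, f z * g (S^[k] z) ∂(ν.bind κ))
        atTop (nhds ((∫ z, f z ∂(ν.bind κ)) * (∫ z, g z ∂(ν.bind κ)))) := by
  intro f g hf hg hfb hgb _ _ ⟨K, hfac⟩
  let η : Kernel (ℤ → (Fin d → ℝ)) (ℤ → (Fin d → Set.Ioo (0:ℝ) 1)) :=
    ⟨κ, Measure.measurable_of_measurable_coe κ hmeas⟩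
  have : IsMarkovKernel η := ⟨hprob⟩
  have hmix : ∀ h, Measurable h → (∃ C : ℝ, ∀ z, |h z| ≤ C) →
      ∫ z, h z ∂(ν.bind κ) = ∫ ω, ∫ z, h z ∂η ω ∂ν := fun h hh hb =>
    Measure.integral_bind (κ := η) (memLp_one_iff_integrable.1 (memLp_of_exists_abs_le hh hb))
  rw [hmix f hf hfb, hmix g hg hgb, mul_comm]
  refine tendsto_cesaro_congr ?_ (herg.tendsto_cesaro_integral_mul_comp_iterate
    (memLp_integral_kernel hg hgb) (memLp_integral_kernel hf hfb))
  filter_upwards [eventually_ge_atTop K] with k hk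
  exact integral_bind_mul_comp_iterate_of_equivariant (κ := η) herg.toMeasurePreserving hSmeas
    hequiv hf hg hfb hgb (hfac k hk)

/-- Cesàro-mean decorrelation for the mixture measure: if `ν` is ergodic and
shift-invariant, the kernel `(μ_ω)` is equivariant, and for bounded measurable `f, g`
depending on finitely many coordinates one has fiberwise factorization
`∫ f·(g∘S^k) dμ_ω = (∫ f dμ_ω)(∫ g∘S^k dμ_ω)` for all sufficiently large `k`, then
`(1/n) Σ_{k<n} ∫ f·(g∘S^k) dμ → (∫ f dμ)(∫ g dμ)` for all such `f, g`. -/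
theorem mixture_cesaro_decorrelation
    (d : ℕ)
    (ν : Measure (ℤ → (Fin d → ℝ))) [IsProbabilityMeasure ν]
    (T : (ℤ → (Fin d → ℝ)) → (ℤ → (Fin d → ℝ))) (hT : ∀ x n, T x n = x (n + 1))
    (S : (ℤ → (Fin d → Set.Ioo (0:ℝ) 1)) → (ℤ → (Fin d → Set.Ioo (0:ℝ) 1)))
    (hS : ∀ y n, S y n = y (n + 1)) (hSmeas : Measurable S)
    (herg : Ergodic T ν)
    (κ : (ℤ → (Fin d → ℝ)) → Measure (ℤ → (Fin d → Set.Ioo (0:ℝ) 1)))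
    (hprob : ∀ ω, IsProbabilityMeasure (κ ω))
    (hmeas : ∀ s : Set (ℤ → (Fin d → Set.Ioo (0:ℝ) 1)), MeasurableSet s →
      Measurable (fun ω => κ ω s))
    (hequiv : ∀ ω (h : (ℤ → (Fin d → Set.Ioo (0:ℝ) 1)) → ℝ), Measurable h →
      (∃ C : ℝ, ∀ z, |h z| ≤ C) →
      ∫ z, h z ∂(κ ω) = ∫ z, h (S z) ∂(κ (T ω))) :
    ∀ (f g : (ℤ → (Fin d → Set.Ioo (0:ℝ) 1)) → ℝ),
      Measurable f → Measurable g →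
      (∃ C : ℝ, ∀ z, |f z| ≤ C) → (∃ C : ℝ, ∀ z, |g z| ≤ C) →
      (∃ N : ℕ, ∀ x y, (∀ i : ℤ, |i| ≤ (N : ℤ) → x i = y i) → f x = f y) →
      (∃ N : ℕ, ∀ x y, (∀ i : ℤ, |i| ≤ (N : ℤ) → x i = y i) → g x = g y) →
      (∃ K : ℕ, ∀ k ≥ K, ∀ ω,
        ∫ z, f z * g (S^[k] z) ∂(κ ω) =
          (∫ z, f z ∂(κ ω)) * (∫ z, g (S^[k] z) ∂(κ ω))) →
      Tendsto (fun n : ℕ =>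
          (1 / (n : ℝ)) * ∑ k ∈ Finset.range n, ∫ z, f z * g (S^[k] z) ∂(ν.bind κ))
        atTop (nhds ((∫ z, f z ∂(ν.bind κ)) * (∫ z, g z ∂(ν.bind κ)))) :=
  mixture_cesaro_decorrelation_general d ν T S hSmeas herg κ hprob hmeas hequiv
end

section
/- Let ν be a strongly mixing shift-invariant measure on Ω = ℝ^ℤ with mixing coefficients α(n), and let (μ_ω) be an equivariant measurable kernel to probabilities on Z = (0,1)^ℤ such that for every set A measurable with respect to coordinates ≤ 0 of Z, the function ω ↦ μ_ω(A) is measurable with respect to coordinates ≤ 0 of Ω, and similarly for coordinates ≥ n. Then the mixture measure μ satisfies |μ(A ∩ B) − μ(A)μ(B)| ≤ 4α(n) for all A measurable w.r.t. coordinates ≤ 0 and B measurable w.r.t. coordinates ≥ n. -/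
open MeasureTheory

/-- The σ-algebra on a product space `ℤ → α` generated by the coordinates `≤ 0`. -/
def pastCoords (α : Type*) [MeasurableSpace α] : MeasurableSpace (ℤ → α) :=
  MeasurableSpace.comap (fun ω => (fun i : {i : ℤ // i ≤ 0} => ω i)) inferInstance

/-- The σ-algebra on a product space `ℤ → α` generated by the coordinates `≥ n`. -/
def futureCoords (α : Type*) [MeasurableSpace α] (n : ℕ) : MeasurableSpace (ℤ → α) :=
  MeasurableSpace.comap (fun ω => (fun i : {i : ℤ // (n : ℤ) ≤ i} => ω i)) inferInstance

/-!
Put `f ω = μ_ω(A)` and `g ω = μ_ω(B)`. Since each fibre `μ_ω` splits over past and future,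
`μ(A ∩ B) = ∫ f g dν`, so the claim is a covariance bound for the past-measurable `f` and the
future-measurable `g`, both `[0,1]`-valued. Rounding down to the grid `ℤ / N` turns `f` and `g`
into `N⁻¹ ∑ₖ 1{f ≥ k/N}` and `N⁻¹ ∑ₗ 1{g ≥ l/N}` at a cost `O(1/N)` in the covariance; by
bilinearity the covariance of the rounded functions is an average of `N²` terms
`ν(P ∩ F) − ν(P) ν(F)` with `P` a past and `F` a future set, each at most `α(n)`.
Letting `N → ∞` bounds the covariance by `α(n)`.
-/

open Set Filter Topology ProbabilityTheory

lemma pastCoords_le_pi (α : Type*) [MeasurableSpace α] : pastCoords α ≤ MeasurableSpace.pi :=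
  (measurable_pi_lambda _ fun _ => measurable_pi_apply _).comap_le

lemma futureCoords_le_pi (α : Type*) [MeasurableSpace α] (n : ℕ) :
    futureCoords α n ≤ MeasurableSpace.pi :=
  (measurable_pi_lambda _ fun _ => measurable_pi_apply _).comap_le

noncomputable def stairApprox (N : ℕ) (x : ℝ) : ℝ :=
  (N : ℝ)⁻¹ * ∑ k ∈ Finset.Icc 1 N, (Ici ((k : ℝ) / N)).indicator 1 x

lemma measurable_stairApprox (N : ℕ) : Measurable (stairApprox N) :=
  measurable_const.mul <| Finset.measurable_sum _ fun _ _ =>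
    measurable_const.indicator measurableSet_Ici

lemma stairApprox_eq_floor (N : ℕ) {x : ℝ} (hx : x ∈ Icc 0 1) :
    stairApprox N x = ⌊N * x⌋₊ / N := by
  rcases Nat.eq_zero_or_pos N with rfl | hN
  · simp [stairApprox]
  have hN' : (0 : ℝ) < N := Nat.cast_pos.2 hN
  have hNx : 0 ≤ (N : ℝ) * x := mul_nonneg hN'.le hx.1
  have hlevels :
      (Finset.Icc 1 N).filter (fun k : ℕ => (k : ℝ) / N ≤ x) = Finset.Icc 1 ⌊N * x⌋₊ := by
    ext k
    simp only [Finset.mem_filter, Finset.mem_Icc, div_le_iff₀ hN', Nat.le_floor_iff hNx]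
    constructor
    · rintro ⟨⟨hk, -⟩, hkx⟩
      exact ⟨hk, by linarith⟩
    · rintro ⟨hk, hkx⟩
      exact ⟨⟨hk, Nat.cast_le.1 (hkx.trans (by nlinarith [hx.2]))⟩, by linarith⟩
  have hsum : ∑ k ∈ Finset.Icc 1 N, (Ici ((k : ℝ) / N)).indicator 1 x = (⌊N * x⌋₊ : ℝ) := by
    simp only [indicator_apply, mem_Ici, Pi.one_apply, Finset.sum_boole, hlevels, Nat.card_Icc,
      add_tsub_cancel_right]
  rw [stairApprox, hsum, inv_mul_eq_div]

lemma stairApprox_mem_Icc (N : ℕ) {x : ℝ} (hx : x ∈ Icc 0 1) : stairApprox N x ∈ Icc 0 x := by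
  rcases Nat.eq_zero_or_pos N with rfl | hN
  · simp [stairApprox, hx.1]
  have hN' : (0 : ℝ) < N := Nat.cast_pos.2 hN
  rw [stairApprox_eq_floor N hx, mem_Icc, div_le_iff₀ hN']
  exact ⟨by positivity, by linarith [Nat.floor_le (mul_nonneg hN'.le hx.1)]⟩

lemma abs_sub_stairApprox_le {N : ℕ} (hN : 0 < N) {x : ℝ} (hx : x ∈ Icc 0 1) :
    |x - stairApprox N x| ≤ (N : ℝ)⁻¹ := by
  have hN' : (0 : ℝ) < N := Nat.cast_pos.2 hN
  rw [abs_of_nonneg (sub_nonneg.2 (stairApprox_mem_Icc N hx).2), stairApprox_eq_floor N hx,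
    sub_le_iff_le_add, ← inv_mul_eq_div, ← mul_one_add, le_inv_mul_iff₀ hN']
  linarith [Nat.lt_floor_add_one ((N : ℝ) * x)]

section Covariance

variable {Ω : Type*} [MeasurableSpace Ω] {μ : Measure Ω} [IsProbabilityMeasure μ]

lemma abs_covariance_le_of_abs_le {X Y : Ω → ℝ} {a b : ℝ}
    (hX : ∀ ω, |X ω| ≤ a) (hY : ∀ ω, |Y ω| ≤ b) : |cov[X, Y; μ]| ≤ 4 * a * b := by
  have hcentered : ∀ {Z : Ω → ℝ} {c : ℝ}, (∀ ω, |Z ω| ≤ c) → ∀ ω, |Z ω - μ[Z]| ≤ 2 * c := by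
    intro Z c hZ ω
    have hmean : |μ[Z]| ≤ c := by
      simpa using norm_integral_le_of_norm_le_const (ae_of_all μ hZ : ∀ᵐ ω ∂μ, ‖Z ω‖ ≤ c)
    linarith [abs_sub (Z ω) μ[Z], hZ ω]
  calc |cov[X, Y; μ]| = ‖∫ ω, (X ω - μ[X]) * (Y ω - μ[Y]) ∂μ‖ := rfl
    _ ≤ 2 * a * (2 * b) * μ.real univ :=
        norm_integral_le_of_norm_le_const <| ae_of_all _ fun ω => by
          rw [norm_mul]
          exact mul_le_mul (hcentered hX ω) (hcentered hY ω) (norm_nonneg _)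
            ((abs_nonneg _).trans (hcentered hX ω))
    _ = 4 * a * b := by rw [probReal_univ, mul_one]; ring

lemma covariance_indicator_one {s t : Set Ω} (hs : MeasurableSet s) (ht : MeasurableSet t) :
    cov[s.indicator 1, t.indicator 1; μ] = μ.real (s ∩ t) - μ.real s * μ.real t := by
  have hmemLp : ∀ {u : Set Ω}, MeasurableSet u → MemLp (u.indicator (1 : Ω → ℝ)) 2 μ :=
    fun hu => (memLp_const (1 : ℝ)).indicator hu
  rw [covariance_eq_sub (hmemLp hs) (hmemLp ht),
    ← inter_indicator_one, integral_indicator_one (hs.inter ht), integral_indicator_one hs,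
    integral_indicator_one ht]

lemma abs_covariance_sub_covariance_le {X X' Y Y' : Ω → ℝ} {δ : ℝ}
    (hX : MemLp X 2 μ) (hX' : MemLp X' 2 μ) (hY : MemLp Y 2 μ) (hY' : MemLp Y' 2 μ)
    (hXX' : ∀ ω, |X ω - X' ω| ≤ δ) (hYY' : ∀ ω, |Y ω - Y' ω| ≤ δ)
    (hX'1 : ∀ ω, |X' ω| ≤ 1) (hY1 : ∀ ω, |Y ω| ≤ 1) :
    |cov[X, Y; μ] - cov[X', Y'; μ]| ≤ 8 * δ := by
  have hsplit : cov[X, Y; μ] - cov[X', Y'; μ] = cov[X - X', Y; μ] + cov[X', Y - Y'; μ] := by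
    rw [covariance_sub_left hX hX' hY, covariance_sub_right hX' hY hY']
    ring
  calc |cov[X, Y; μ] - cov[X', Y'; μ]|
      ≤ |cov[X - X', Y; μ]| + |cov[X', Y - Y'; μ]| := hsplit ▸ abs_add_le _ _
    _ ≤ 4 * δ * 1 + 4 * 1 * δ :=
        add_le_add (abs_covariance_le_of_abs_le hXX' hY1) (abs_covariance_le_of_abs_le hX'1 hYY')
    _ = 8 * δ := by ring

variable {f g : Ω → ℝ} {a : ℝ}

lemma abs_covariance_stairApprox_le (hf : Measurable f) (hg : Measurable g)
    (hcov : ∀ c d, |μ.real (f ⁻¹' Ici c ∩ g ⁻¹' Ici d)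
      - μ.real (f ⁻¹' Ici c) * μ.real (g ⁻¹' Ici d)| ≤ a) {N : ℕ} (hN : 0 < N) :
    |cov[stairApprox N ∘ f, stairApprox N ∘ g; μ]| ≤ a := by
  have hlevel : ∀ h : Ω → ℝ, stairApprox N ∘ h = fun ω =>
      (N : ℝ)⁻¹ * ∑ k ∈ Finset.Icc 1 N, (h ⁻¹' Ici ((k : ℝ) / N)).indicator 1 ω := by
    intro h
    ext ω
    simp only [Function.comp_apply, stairApprox, ← indicator_comp_right]
    rfl
  have hmemLp : ∀ {h : Ω → ℝ}, Measurable h → ∀ k : ℕ,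
      MemLp ((h ⁻¹' Ici ((k : ℝ) / N)).indicator (1 : Ω → ℝ)) 2 μ :=
    fun hh _ => (memLp_const (1 : ℝ)).indicator (hh measurableSet_Ici)
  rw [hlevel, hlevel, covariance_const_mul_left, covariance_const_mul_right,
    covariance_fun_sum_fun_sum' (fun k _ => hmemLp hf k) (fun l _ => hmemLp hg l)]
  simp only [covariance_indicator_one (hf measurableSet_Ici) (hg measurableSet_Ici)]
  calc _ ≤ |(N : ℝ)⁻¹| * (|(N : ℝ)⁻¹| * ∑ k ∈ Finset.Icc 1 N, ∑ l ∈ Finset.Icc 1 N, a) := by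
        rw [abs_mul, abs_mul]
        gcongr
        exact (Finset.abs_sum_le_sum_abs _ _).trans <| Finset.sum_le_sum fun k _ =>
          (Finset.abs_sum_le_sum_abs _ _).trans <| Finset.sum_le_sum fun l _ => hcov _ _
    _ = a := by
        simp only [Finset.sum_const, Nat.card_Icc, add_tsub_cancel_right, nsmul_eq_mul,
          abs_inv, Nat.abs_cast]
        field_simp

theorem abs_covariance_le_of_levelSets (hf : Measurable f) (hg : Measurable g)
    (hf01 : ∀ ω, f ω ∈ Icc 0 1) (hg01 : ∀ ω, g ω ∈ Icc 0 1)
    (hcov : ∀ c d, |μ.real (f ⁻¹' Ici c ∩ g ⁻¹' Ici d)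
      - μ.real (f ⁻¹' Ici c) * μ.real (g ⁻¹' Ici d)| ≤ a) :
    |μ[f * g] - μ[f] * μ[g]| ≤ a := by
  have hmemLp : ∀ {h : Ω → ℝ}, Measurable h → (∀ ω, h ω ∈ Icc 0 1) → MemLp h 2 μ :=
    fun hh h01 => .of_bound hh.aestronglyMeasurable 1 <| ae_of_all _ fun ω =>
      abs_le.2 ⟨by linarith [(h01 ω).1], (h01 ω).2⟩
  have habs : ∀ {h : Ω → ℝ}, (∀ ω, h ω ∈ Icc 0 1) → ∀ ω, |h ω| ≤ 1 :=
    fun h01 ω => abs_le.2 ⟨by linarith [(h01 ω).1], (h01 ω).2⟩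
  have happrox : ∀ N : ℕ, 0 < N → |cov[f, g; μ]| ≤ a + 8 / N := by
    intro N hN
    have hN01 : ∀ {h : Ω → ℝ}, (∀ ω, h ω ∈ Icc 0 1) → ∀ ω, stairApprox N (h ω) ∈ Icc 0 1 :=
      fun h01 ω => Icc_subset_Icc_right (h01 ω).2 (stairApprox_mem_Icc N (h01 ω))
    have hdiff := abs_covariance_sub_covariance_le (hmemLp hf hf01)
      (hmemLp ((measurable_stairApprox N).comp hf) (hN01 hf01)) (hmemLp hg hg01)
      (hmemLp ((measurable_stairApprox N).comp hg) (hN01 hg01))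
      (fun ω => abs_sub_stairApprox_le hN (hf01 ω)) (fun ω => abs_sub_stairApprox_le hN (hg01 ω))
      (habs (hN01 hf01)) (habs hg01)
    have hstairs := abs_covariance_stairApprox_le hf hg hcov hN (μ := μ)
    rw [div_eq_mul_inv]
    linarith [abs_sub_abs_le_abs_sub cov[f, g; μ] cov[stairApprox N ∘ f, stairApprox N ∘ g; μ]]
  have hlim : Tendsto (fun N : ℕ => a + 8 / N) atTop (𝓝 a) := by
    simpa using tendsto_const_nhds.add (tendsto_const_div_atTop_nhds_zero_nat (8 : ℝ))
  rw [← covariance_eq_sub (hmemLp hf hf01) (hmemLp hg hg01)]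
  exact ge_of_tendsto hlim (eventually_atTop.2 ⟨1, fun N hN => happrox N hN⟩)

end Covariance

lemma measureReal_bind_eq_integral {α β : Type*} [MeasurableSpace α] [MeasurableSpace β]
    {m : Measure α} {κ : α → Measure β} [∀ a, IsFiniteMeasure (κ a)] (hκ : AEMeasurable κ m)
    {s : Set β} (hs : MeasurableSet s) : (m.bind κ).real s = ∫ a, (κ a).real s ∂m := by
  rw [measureReal_def, Measure.bind_apply hs hκ, ← integral_toReal (f := fun a => κ a s)
    ((Measure.measurable_coe hs).comp_aemeasurable hκ) (ae_of_all _ fun a => measure_lt_top _ _)]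
  rfl

/-- If `ν` is strongly mixing with coefficients `α(n)` on `ℝ^ℤ` and `(μ_ω)` is an
equivariant measurable kernel to probabilities on `(0,1)^ℤ` such that `ω ↦ μ_ω(A)` is
past-measurable for past-measurable `A` (and future-measurable for future ones), with
the fibers independent across past and future coordinates, then the mixture measure
`μ = ν.bind κ` satisfies `|μ(A ∩ B) − μ(A)μ(B)| ≤ 4 α(n)` for `A` past-measurable and
`B` measurable w.r.t. coordinates `≥ n`. -/
theorem mixture_strong_mixing_bound
    (ν : Measure (ℤ → ℝ)) [IsProbabilityMeasure ν]
    (α : ℕ → ℝ)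
    (hα : ∀ (n : ℕ) (A B : Set (ℤ → ℝ)),
      MeasurableSet[pastCoords ℝ] A → MeasurableSet[futureCoords ℝ n] B →
      |(ν (A ∩ B)).toReal - (ν A).toReal * (ν B).toReal| ≤ α n)
    (κ : (ℤ → ℝ) → Measure (ℤ → Set.Ioo (0:ℝ) 1))
    (hprob : ∀ ω, IsProbabilityMeasure (κ ω))
    (hmeaspast : ∀ A : Set (ℤ → Set.Ioo (0:ℝ) 1),
      MeasurableSet[pastCoords (Set.Ioo (0:ℝ) 1)] A →
      Measurable[pastCoords ℝ] (fun ω => (κ ω A).toReal))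
    (hmeasfut : ∀ (n : ℕ) (B : Set (ℤ → Set.Ioo (0:ℝ) 1)),
      MeasurableSet[futureCoords (Set.Ioo (0:ℝ) 1) n] B →
      Measurable[futureCoords ℝ n] (fun ω => (κ ω B).toReal))
    (hindep : ∀ (n : ℕ) (ω : ℤ → ℝ) (A B : Set (ℤ → Set.Ioo (0:ℝ) 1)),
      MeasurableSet[pastCoords (Set.Ioo (0:ℝ) 1)] A →
      MeasurableSet[futureCoords (Set.Ioo (0:ℝ) 1) n] B →
      κ ω (A ∩ B) = κ ω A * κ ω B) :
    ∀ (n : ℕ) (A B : Set (ℤ → Set.Ioo (0:ℝ) 1)),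
      MeasurableSet[pastCoords (Set.Ioo (0:ℝ) 1)] A →
      MeasurableSet[futureCoords (Set.Ioo (0:ℝ) 1) n] B →
      |((ν.bind κ) (A ∩ B)).toReal - ((ν.bind κ) A).toReal * ((ν.bind κ) B).toReal| ≤
        4 * α n := by
  intro n A B hA hB
  have hα0 : 0 ≤ α n := (abs_nonneg _).trans (hα n ∅ ∅ (@MeasurableSet.empty _ (pastCoords ℝ))
    (@MeasurableSet.empty _ (futureCoords ℝ n)))
  by_cases hκ : AEMeasurable κ ν
  swap
  · -- `ν.bind κ` is the zero measure when `κ` is not a.e.-measurable.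
    simp [Measure.bind, Measure.map_of_not_aemeasurable hκ, hα0]
  have := hprob
  have hindep_real : ∀ ω, (κ ω).real (A ∩ B) = (κ ω).real A * (κ ω).real B := fun ω => by
    simp only [measureReal_def, hindep n ω A B hA hB, ENNReal.toReal_mul]
  have hunit : ∀ (S : Set (ℤ → Set.Ioo (0:ℝ) 1)) ω, (κ ω).real S ∈ Set.Icc 0 1 :=
    fun _ _ => ⟨measureReal_nonneg, measureReal_le_one⟩
  have hmix := abs_covariance_le_of_levelSets (μ := ν)
    ((hmeaspast A hA).mono (pastCoords_le_pi ℝ) le_rfl)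
    ((hmeasfut n B hB).mono (futureCoords_le_pi ℝ n) le_rfl) (hunit A) (hunit B)
    fun c d => hα n _ _ (hmeaspast A hA measurableSet_Ici) (hmeasfut n B hB measurableSet_Ici)
  have hA' := pastCoords_le_pi _ A hA
  have hB' := futureCoords_le_pi _ n B hB
  simp only [← measureReal_def]
  rw [measureReal_bind_eq_integral hκ (hA'.inter hB'), measureReal_bind_eq_integral hκ hA',
    measureReal_bind_eq_integral hκ hB']
  simp only [hindep_real]
  exact hmix.trans (by linarith)
end

section
/- Covariance inequality for strong mixing: if f, g : Ω → [0,1] are measurable with respect to σ-algebras 𝓐 and 𝓑 respectively, and α = sup{|ν(A∩B) − ν(A)ν(B)| : A ∈ 𝓐, B ∈ 𝓑}, then |∫ fg dν − ∫ f dν ∫ g dν| ≤ 4α. -/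
open MeasureTheory ENNReal

/-- Covariance inequality for strong mixing: if `f, g : Ω → [0,1]` are measurable with
respect to sub-σ-algebras `𝓐` and `𝓑` respectively, and `α` bounds
`|ν(A∩B) − ν(A)ν(B)|` over `A ∈ 𝓐`, `B ∈ 𝓑`, then
`|∫ fg dν − ∫ f dν ∫ g dν| ≤ 4α`. -/
theorem covariance_inequality_strong_mixing
    (Ω : Type*) [m : MeasurableSpace Ω] (ν : Measure Ω) [IsProbabilityMeasure ν]
    (mA mB : MeasurableSpace Ω) (hmA : mA ≤ m) (hmB : mB ≤ m)
    (α : ℝ)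
    (hα : ∀ A B : Set Ω, MeasurableSet[mA] A → MeasurableSet[mB] B →
      |(ν (A ∩ B)).toReal - (ν A).toReal * (ν B).toReal| ≤ α)
    (f g : Ω → ℝ)
    (hf : Measurable[mA] f) (hg : Measurable[mB] g)
    (hf01 : ∀ ω, f ω ∈ Set.Icc (0 : ℝ) 1) (hg01 : ∀ ω, g ω ∈ Set.Icc (0 : ℝ) 1) :
    |∫ ω, f ω * g ω ∂ν - (∫ ω, f ω ∂ν) * ∫ ω, g ω ∂ν| ≤ 4 * α := by
  classical
  have hα0 : 0 ≤ α := by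
    have h := hα ∅ ∅ (@MeasurableSet.empty Ω mA) (@MeasurableSet.empty Ω mB)
    simpa using h
  have hfm : Measurable[m] f := fun s hs => hmA _ (hf hs)
  have hgm : Measurable[m] g := fun s hs => hmB _ (hg hs)
  set A : ℝ → Set Ω := fun s => {ω | s < f ω} with hA
  set B : ℝ → Set Ω := fun t => {ω | t < g ω} with hB
  have hAm : ∀ s, MeasurableSet[m] (A s) := fun s => hmA _ (hf measurableSet_Ioi)
  have hBm : ∀ t, MeasurableSet[m] (B t) := fun t => hmB _ (hg measurableSet_Ioi)
  have hα' : ∀ p : ℝ × ℝ,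
      |(ν (A p.1 ∩ B p.2)).toReal - (ν (A p.1)).toReal * (ν (B p.2)).toReal| ≤ α :=
    fun p => hα (A p.1) (B p.2) (hf measurableSet_Ioi) (hg measurableSet_Ioi)
  clear hα hf hg hmA hmB mA mB
  set μ1 : Measure ℝ := volume.restrict (Set.Ioc (0:ℝ) 1) with hμ1
  haveI : IsProbabilityMeasure μ1 := ⟨by simp [hμ1, Real.volume_Ioc]⟩
  set μ2 : Measure (ℝ × ℝ) := μ1.prod μ1 with hμ2
  haveI : IsProbabilityMeasure μ2 := by rw [hμ2]; infer_instance
  have hμ1Iio : ∀ c : ℝ, 0 ≤ c → c ≤ 1 → μ1 (Set.Iio c) = ENNReal.ofReal c := by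
    intro c h0 h1
    rw [hμ1, Measure.restrict_apply measurableSet_Iio]
    have : Set.Iio c ∩ Set.Ioc 0 1 = Set.Ioo 0 c := by
      ext x
      constructor
      · rintro ⟨hx1, hx2, _⟩; exact ⟨hx2, hx1⟩
      · rintro ⟨hx1, hx2⟩; exact ⟨hx2, hx1, hx2.le.trans h1⟩
    rw [this, Real.volume_Ioo]
    simp
  -- one-variable layer cake
  have layer : ∀ (h : Ω → ℝ), Measurable[m] h → (∀ ω, h ω ∈ Set.Icc (0:ℝ) 1) →
      ∫ ω, h ω ∂ν = (∫⁻ s, ν {ω | s < h ω} ∂μ1).toReal := by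
    intro h hm h01
    have hS : MeasurableSet {z : Ω × ℝ | z.2 < h z.1} :=
      measurableSet_lt measurable_snd (hm.comp measurable_fst)
    have hind : Measurable (Set.indicator {z : Ω × ℝ | z.2 < h z.1} (1 : Ω × ℝ → ℝ≥0∞)) :=
      measurable_one.indicator hS
    have key : ∫⁻ ω, ENNReal.ofReal (h ω) ∂ν = ∫⁻ s, ν {ω | s < h ω} ∂μ1 := by
      have e1 : ∀ ω, ENNReal.ofReal (h ω)
          = ∫⁻ s, Set.indicator {z : Ω × ℝ | z.2 < h z.1} (1 : Ω × ℝ → ℝ≥0∞) (ω, s) ∂μ1 := by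
        intro ω
        have e : (fun s => Set.indicator {z : Ω × ℝ | z.2 < h z.1} (1 : Ω × ℝ → ℝ≥0∞) (ω, s))
            = fun s => Set.indicator (Set.Iio (h ω)) (1 : ℝ → ℝ≥0∞) s := by
          ext s
          by_cases hs : s < h ω <;> simp [Set.indicator, hs]
        rw [e, lintegral_indicator_one measurableSet_Iio,
          hμ1Iio (h ω) (h01 ω).1 (h01 ω).2]
      calc ∫⁻ ω, ENNReal.ofReal (h ω) ∂ν
          = ∫⁻ ω, ∫⁻ s, Set.indicator {z : Ω × ℝ | z.2 < h z.1} (1 : Ω × ℝ → ℝ≥0∞) (ω, s) ∂μ1 ∂ν :=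
            lintegral_congr e1
        _ = ∫⁻ s, ∫⁻ ω, Set.indicator {z : Ω × ℝ | z.2 < h z.1} (1 : Ω × ℝ → ℝ≥0∞) (ω, s) ∂ν ∂μ1 :=
            lintegral_lintegral_swap hind.aemeasurable
        _ = ∫⁻ s, ν {ω | s < h ω} ∂μ1 := by
            refine lintegral_congr fun s => ?_
            have e : (fun ω => Set.indicator {z : Ω × ℝ | z.2 < h z.1} (1 : Ω × ℝ → ℝ≥0∞) (ω, s))
                = fun ω => Set.indicator {ω | s < h ω} (1 : Ω → ℝ≥0∞) ω := by
              ext ω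
              by_cases hs : s < h ω <;> simp [Set.indicator, hs]
            have hms : MeasurableSet {ω | s < h ω} := hm measurableSet_Ioi
            rw [e, lintegral_indicator_one hms]
    rw [integral_eq_lintegral_of_nonneg_ae (Filter.Eventually.of_forall fun ω => (h01 ω).1)
      hm.aestronglyMeasurable, key]
  -- two-variable layer cake for f*g
  have hS2 : MeasurableSet {z : Ω × (ℝ × ℝ) | z.2.1 < f z.1 ∧ z.2.2 < g z.1} := by
    apply MeasurableSet.inter
    · exact measurableSet_lt (measurable_fst.comp measurable_snd) (hfm.comp measurable_fst)
    · exact measurableSet_lt (measurable_snd.comp measurable_snd) (hgm.comp measurable_fst)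
  have hind2 : Measurable (Set.indicator {z : Ω × (ℝ × ℝ) | z.2.1 < f z.1 ∧ z.2.2 < g z.1}
      (1 : Ω × (ℝ × ℝ) → ℝ≥0∞)) := measurable_one.indicator hS2
  have einner : ∀ p : ℝ × ℝ, (fun ω => Set.indicator
      {z : Ω × (ℝ × ℝ) | z.2.1 < f z.1 ∧ z.2.2 < g z.1} (1 : Ω × (ℝ × ℝ) → ℝ≥0∞) (ω, p))
      = fun ω => Set.indicator (A p.1 ∩ B p.2) (1 : Ω → ℝ≥0∞) ω := by
    intro p
    ext ω
    by_cases h1 : p.1 < f ω <;> by_cases h2 : p.2 < g ω <;>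
      simp [Set.indicator, hA, hB, Set.mem_setOf_eq, h1, h2]
  have keyfg : ∫⁻ ω, ENNReal.ofReal (f ω * g ω) ∂ν = ∫⁻ p, ν (A p.1 ∩ B p.2) ∂μ2 := by
    have e1 : ∀ ω, ENNReal.ofReal (f ω * g ω)
        = ∫⁻ p, Set.indicator {z : Ω × (ℝ × ℝ) | z.2.1 < f z.1 ∧ z.2.2 < g z.1}
            (1 : Ω × (ℝ × ℝ) → ℝ≥0∞) (ω, p) ∂μ2 := by
      intro ω
      have e : (fun p : ℝ × ℝ => Set.indicator {z : Ω × (ℝ × ℝ) | z.2.1 < f z.1 ∧ z.2.2 < g z.1}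
          (1 : Ω × (ℝ × ℝ) → ℝ≥0∞) (ω, p))
          = fun p => Set.indicator (Set.Iio (f ω) ×ˢ Set.Iio (g ω)) (1 : ℝ × ℝ → ℝ≥0∞) p := by
        ext p
        by_cases h1 : p.1 < f ω <;> by_cases h2 : p.2 < g ω <;>
          simp [Set.indicator, Set.mem_prod, h1, h2]
      rw [e, lintegral_indicator_one (measurableSet_Iio.prod measurableSet_Iio),
        hμ2, Measure.prod_prod, hμ1Iio (f ω) (hf01 ω).1 (hf01 ω).2,
        hμ1Iio (g ω) (hg01 ω).1 (hg01 ω).2,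
        ENNReal.ofReal_mul (hf01 ω).1]
    calc ∫⁻ ω, ENNReal.ofReal (f ω * g ω) ∂ν
        = ∫⁻ ω, ∫⁻ p, Set.indicator {z : Ω × (ℝ × ℝ) | z.2.1 < f z.1 ∧ z.2.2 < g z.1}
            (1 : Ω × (ℝ × ℝ) → ℝ≥0∞) (ω, p) ∂μ2 ∂ν := lintegral_congr e1
      _ = ∫⁻ p, ∫⁻ ω, Set.indicator {z : Ω × (ℝ × ℝ) | z.2.1 < f z.1 ∧ z.2.2 < g z.1}
            (1 : Ω × (ℝ × ℝ) → ℝ≥0∞) (ω, p) ∂ν ∂μ2 := lintegral_lintegral_swap hind2.aemeasurable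
      _ = ∫⁻ p, ν (A p.1 ∩ B p.2) ∂μ2 := by
          refine lintegral_congr fun p => ?_
          rw [einner p, lintegral_indicator_one ((hAm p.1).inter (hBm p.2))]
  -- measurability of the integrands on ℝ × ℝ
  have hPmeas : Measurable fun p : ℝ × ℝ => ν (A p.1 ∩ B p.2) := by
    have h1 : Measurable fun p : ℝ × ℝ => ∫⁻ ω, Set.indicator
        {z : Ω × (ℝ × ℝ) | z.2.1 < f z.1 ∧ z.2.2 < g z.1} (1 : Ω × (ℝ × ℝ) → ℝ≥0∞) (ω, p) ∂ν :=
      Measurable.lintegral_prod_left' hind2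
    have e : (fun p : ℝ × ℝ => ν (A p.1 ∩ B p.2)) = fun p : ℝ × ℝ => ∫⁻ ω, Set.indicator
        {z : Ω × (ℝ × ℝ) | z.2.1 < f z.1 ∧ z.2.2 < g z.1} (1 : Ω × (ℝ × ℝ) → ℝ≥0∞) (ω, p) ∂ν := by
      funext p
      rw [einner p, lintegral_indicator_one ((hAm p.1).inter (hBm p.2))]
    rw [e]; exact h1
  have hνA : Measurable fun s : ℝ => ν (A s) := by
    have h : Antitone fun s : ℝ => ν (A s) := fun s t hst =>
      measure_mono fun ω hω => lt_of_le_of_lt hst hω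
    exact h.measurable
  have hνB : Measurable fun t : ℝ => ν (B t) := by
    have h : Antitone fun t : ℝ => ν (B t) := fun s t hst =>
      measure_mono fun ω hω => lt_of_le_of_lt hst hω
    exact h.measurable
  have hQmeas : Measurable fun p : ℝ × ℝ => ν (A p.1) * ν (B p.2) :=
    (hνA.comp measurable_fst).mul (hνB.comp measurable_snd)
  -- real versions
  have hfg : ∫ ω, f ω * g ω ∂ν = ∫ p, (ν (A p.1 ∩ B p.2)).toReal ∂μ2 := by
    have h0 : ∀ ω, 0 ≤ f ω * g ω := fun ω => mul_nonneg (hf01 ω).1 (hg01 ω).1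
    rw [integral_eq_lintegral_of_nonneg_ae (Filter.Eventually.of_forall h0)
      (hfm.mul hgm).aestronglyMeasurable, keyfg,
      integral_toReal hPmeas.aemeasurable
        (Filter.Eventually.of_forall fun p => measure_lt_top ν _)]
  have hprod : (∫ ω, f ω ∂ν) * ∫ ω, g ω ∂ν
      = ∫ p, (ν (A p.1)).toReal * (ν (B p.2)).toReal ∂μ2 := by
    rw [layer f hfm hf01, layer g hgm hg01]
    have e1 : ∫ p, (ν (A p.1)).toReal * (ν (B p.2)).toReal ∂μ2
        = ∫ p, (ν (A p.1) * ν (B p.2)).toReal ∂μ2 := by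
      refine integral_congr_ae (Filter.Eventually.of_forall fun p => ?_)
      exact (ENNReal.toReal_mul).symm
    rw [e1, integral_toReal hQmeas.aemeasurable
      (Filter.Eventually.of_forall fun p =>
        ENNReal.mul_lt_top (measure_lt_top ν _) (measure_lt_top ν _)),
      hμ2, lintegral_prod_mul hνA.aemeasurable hνB.aemeasurable, ENNReal.toReal_mul]
  -- integrability
  have htoReal_le_one : ∀ S : Set Ω, (ν S).toReal ≤ 1 := fun S =>
    ENNReal.toReal_le_of_le_ofReal zero_le_one (by simpa using prob_le_one (μ := ν) (s := S))
  have hPint : Integrable (fun p : ℝ × ℝ => (ν (A p.1 ∩ B p.2)).toReal) μ2 := by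
    refine (integrable_const (1:ℝ)).mono' hPmeas.ennreal_toReal.aestronglyMeasurable
      (Filter.Eventually.of_forall fun p => ?_)
    rw [Real.norm_eq_abs, abs_of_nonneg ENNReal.toReal_nonneg]
    exact htoReal_le_one _
  have hQint : Integrable (fun p : ℝ × ℝ => (ν (A p.1)).toReal * (ν (B p.2)).toReal) μ2 := by
    refine (integrable_const (1:ℝ)).mono'
      (((hνA.comp measurable_fst).ennreal_toReal.mul
        (hνB.comp measurable_snd).ennreal_toReal).aestronglyMeasurable)
      (Filter.Eventually.of_forall fun p => ?_)
    rw [Real.norm_eq_abs, abs_of_nonneg (mul_nonneg ENNReal.toReal_nonneg ENNReal.toReal_nonneg)]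
    exact mul_le_one₀ (htoReal_le_one _) ENNReal.toReal_nonneg (htoReal_le_one _)
  -- assemble
  rw [hfg, hprod, ← integral_sub hPint hQint]
  calc |∫ p, ((ν (A p.1 ∩ B p.2)).toReal - (ν (A p.1)).toReal * (ν (B p.2)).toReal) ∂μ2|
      ≤ ∫ p, |(ν (A p.1 ∩ B p.2)).toReal - (ν (A p.1)).toReal * (ν (B p.2)).toReal| ∂μ2 := by
        rw [← Real.norm_eq_abs]
        refine (norm_integral_le_integral_norm _).trans_eq ?_
        simp [Real.norm_eq_abs]
    _ ≤ ∫ _p, α ∂μ2 := by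
        refine integral_mono (hPint.sub hQint).abs (integrable_const α) fun p => ?_
        exact hα' p
    _ = α := by simp
    _ ≤ 4 * α := by linarith
end

section
/- If (X_n)_{n∈ℤ} is a strictly stationary real-valued process with CDF F, then there exists a strictly stationary process (U_n)_{n∈ℤ} with values in (0,1), each U_n uniformly distributed on (0,1), such that (F⁻¹(U_n))_{n∈ℤ} has the same distribution (as a process) as (X_n)_{n∈ℤ}. -/
/-!
Let `V` be uniform on `(0,1)` and independent of `X`, and put `U_n = G(X_n, V)`, where
`G(x, v) = F(x-) + v (F(x) - F(x-))` is the distributional transform of `F`. Since the same `V`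
randomizes every coordinate, `(U_n)` is stationary along with `(X_n)`. Each `U_n` is uniform: for
`0 < u < 1` and `x₀ = F⁻¹(u)`, the event `G(x, V) < u` is certain for `x < x₀` and impossible for
`x > x₀`, while the atom at `x₀` contributes exactly the missing mass `u - F(x₀-)`. Finally
`F⁻¹(U_n) ≤ X_n` everywhere and both sides have law `F` (the quantile transform of a uniform
variable has law `F`), so they agree almost surely.
-/

open MeasureTheory Set Filter Topology Function
open scoped ENNReal

namespace MeasureTheory

/-- Composing with the bounded, strictly increasing `arctan` reduces this to the criterion
`ae_eq_of_ae_le_of_lintegral_le`. -/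
lemma ae_eq_of_ae_le_of_map_eq {α : Type*} [MeasurableSpace α]
    {μ : Measure α} [IsFiniteMeasure μ] {f g : α → ℝ} (hf : AEMeasurable f μ)
    (hg : AEMeasurable g μ) (hfg : f ≤ᵐ[μ] g) (hmap : μ.map f = μ.map g) : f =ᵐ[μ] g := by
  set φ : ℝ → ℝ≥0∞ := fun x => ENNReal.ofReal (Real.arctan x + Real.pi / 2)
  have hφ_pos : ∀ x, 0 < Real.arctan x + Real.pi / 2 := fun x => by
    linarith [Real.neg_pi_div_two_lt_arctan x]
  have hφ : Measurable φ := by fun_prop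
  have hφ_mono : Monotone φ := fun x y hxy =>
    ENNReal.ofReal_le_ofReal (by linarith [Real.arctan_mono hxy])
  have hφ_inj : Injective φ := fun x y hxy =>
    Real.arctan_strictMono.injective <| by
      simpa using (ENNReal.ofReal_eq_ofReal_iff (hφ_pos x).le (hφ_pos y).le).1 hxy
  have hlint : ∫⁻ a, φ (f a) ∂μ = ∫⁻ a, φ (g a) ∂μ := by
    rw [← lintegral_map' hφ.aemeasurable hf, hmap, lintegral_map' (hmap ▸ hφ.aemeasurable) hg]
  have hfin : ∫⁻ a, φ (f a) ∂μ ≠ ∞ := by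
    refine ne_top_of_le_ne_top (b := ∫⁻ _, ENNReal.ofReal Real.pi ∂μ) ?_ (lintegral_mono fun a =>
      ENNReal.ofReal_le_ofReal (by linarith [Real.arctan_lt_pi_div_two (f a)]))
    simp [lintegral_const, ENNReal.mul_eq_top]
  have := ae_eq_of_ae_le_of_lintegral_le (hfg.mono fun a h => hφ_mono h) hfin
    (hφ.comp_aemeasurable hg) hlint.ge
  filter_upwards [this] with a ha using hφ_inj ha

end MeasureTheory

namespace ProbabilityTheory

lemma uniform_Iio (u : ℝ) :
    volume.restrict (Ioo (0 : ℝ) 1) (Iio u) = ENNReal.ofReal (min u 1) := by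
  rw [Measure.restrict_apply' measurableSet_Ioo, Iio_inter_Ioo, Real.volume_Ioo, sub_zero]

lemma uniform_Iic (u : ℝ) :
    volume.restrict (Ioo (0 : ℝ) 1) (Iic u) = ENNReal.ofReal (min u 1) := by
  rw [← uniform_Iio, measure_congr Iio_ae_eq_Iic]

instance : IsProbabilityMeasure (volume.restrict (Ioo (0 : ℝ) 1)) :=
  ⟨by simp⟩

variable (μ : Measure ℝ)

/-- The generalized inverse `F⁻¹(u) = inf {t | u ≤ F t}` of the CDF. It is only meaningful for
`u ∈ (0,1)`: for `u ≤ 0` the set is unbounded below and for `u ≥ 1` it may be empty, and `sInf`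
returns the junk value `0` in both cases. -/
noncomputable def quantile (u : ℝ) : ℝ := sInf {t | u ≤ cdf μ t}

noncomputable def distribTransform (p : ℝ × ℝ) : ℝ :=
  leftLim (cdf μ) p.1 + p.2 * (cdf μ p.1 - leftLim (cdf μ) p.1)

variable {μ}

lemma bddBelow_setOf_le_cdf {u : ℝ} (hu : 0 < u) : BddBelow {t | u ≤ cdf μ t} := by
  obtain ⟨b, hb⟩ := ((tendsto_cdf_atBot μ).eventually (gt_mem_nhds hu)).exists_forall_of_atBot
  exact ⟨b, fun t ht => le_of_not_ge fun htb => (hb t htb).not_ge ht⟩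

lemma le_cdf_quantile {u : ℝ} (hne : ∃ t, u ≤ cdf μ t) :
    u ≤ cdf μ (quantile μ u) := by
  have hright : Tendsto (cdf μ) (𝓝[>] quantile μ u) (𝓝 (cdf μ (quantile μ u))) :=
    ((cdf μ).right_continuous' _).tendsto.mono_left (nhdsWithin_mono _ Ioi_subset_Ici_self)
  refine ge_of_tendsto hright (eventually_nhdsWithin_of_forall fun t ht => ?_)
  obtain ⟨s, hs, hst⟩ := exists_lt_of_csInf_lt hne ht
  exact le_trans hs (monotone_cdf μ hst.le)

lemma quantile_le_iff {u : ℝ} (hu : 0 < u) (hne : ∃ t, u ≤ cdf μ t) {t : ℝ} :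
    quantile μ u ≤ t ↔ u ≤ cdf μ t :=
  ⟨fun h => (le_cdf_quantile hne).trans (monotone_cdf μ h),
    fun h => csInf_le (bddBelow_setOf_le_cdf hu) h⟩

lemma exists_le_cdf {u : ℝ} (hu : u < 1) : ∃ t, u ≤ cdf μ t :=
  ((tendsto_cdf_atTop μ).eventually (lt_mem_nhds hu)).exists.imp fun _ => le_of_lt

lemma quantile_le_iff_of_mem_Ioo {u : ℝ} (hu : u ∈ Ioo 0 1) {t : ℝ} :
    quantile μ u ≤ t ↔ u ≤ cdf μ t :=
  quantile_le_iff hu.1 (exists_le_cdf hu.2)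

lemma monotoneOn_quantile : MonotoneOn (quantile μ) (Ioo 0 1) := fun _ hu _ hu' huu' =>
  (quantile_le_iff_of_mem_Ioo hu).2 (huu'.trans ((quantile_le_iff_of_mem_Ioo hu').1 le_rfl))

lemma aemeasurable_quantile : AEMeasurable (quantile μ) (volume.restrict (Ioo (0 : ℝ) 1)) :=
  aemeasurable_restrict_of_monotoneOn measurableSet_Ioo monotoneOn_quantile

lemma map_quantile_uniform [IsProbabilityMeasure μ] :
    (volume.restrict (Ioo (0 : ℝ) 1)).map (quantile μ) = μ := by
  have hq := aemeasurable_quantile (μ := μ)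
  refine Measure.ext_of_Iic _ _ fun t => ?_
  have hpre : quantile μ ⁻¹' Iic t ∩ Ioo 0 1 = Iic (cdf μ t) ∩ Ioo 0 1 := by
    ext u
    simp only [mem_inter_iff, mem_preimage, mem_Iic, and_congr_left_iff]
    exact fun hu => quantile_le_iff_of_mem_Ioo hu
  rw [Measure.map_apply_of_aemeasurable hq measurableSet_Iic,
    Measure.restrict_apply' measurableSet_Ioo, hpre, ← Measure.restrict_apply' measurableSet_Ioo,
    uniform_Iic, min_eq_left (cdf_le_one μ t), ofReal_cdf]

lemma leftLim_cdf_nonneg (x : ℝ) : 0 ≤ leftLim (cdf μ) x :=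
  (cdf_nonneg μ (x - 1)).trans ((monotone_cdf μ).le_leftLim (sub_one_lt x))

lemma leftLim_cdf_le_cdf (x : ℝ) : leftLim (cdf μ) x ≤ cdf μ x :=
  (monotone_cdf μ).leftLim_le le_rfl

lemma leftLim_cdf_le_distribTransform {x v : ℝ} (hv : 0 ≤ v) :
    leftLim (cdf μ) x ≤ distribTransform μ (x, v) :=
  le_add_of_nonneg_right (mul_nonneg hv (sub_nonneg.2 (leftLim_cdf_le_cdf x)))

lemma distribTransform_le_cdf {x v : ℝ} (hv : v ≤ 1) : distribTransform μ (x, v) ≤ cdf μ x := by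
  have := mul_le_of_le_one_left (sub_nonneg.2 (leftLim_cdf_le_cdf (μ := μ) x)) hv
  unfold distribTransform; linarith

lemma measurable_distribTransform : Measurable (distribTransform μ) := by
  have hF := (monotone_cdf μ).measurable
  have hF' := (monotone_cdf μ).leftLim.measurable
  unfold distribTransform
  fun_prop

lemma measure_Iio_eq_ofReal_leftLim_cdf [IsProbabilityMeasure μ] (x : ℝ) :
    μ (Iio x) = ENNReal.ofReal (leftLim (cdf μ) x) := by
  conv_lhs => rw [← measure_cdf μ]
  rw [(cdf μ).measure_Iio (tendsto_cdf_atBot μ), sub_zero]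

lemma measure_singleton_eq_ofReal_cdf_sub [IsProbabilityMeasure μ] (x : ℝ) :
    μ {x} = ENNReal.ofReal (cdf μ x - leftLim (cdf μ) x) := by
  conv_lhs => rw [← measure_cdf μ]
  exact (cdf μ).measure_singleton x

lemma ofReal_add_mul_uniform_setOf_add_mul_lt {a d u : ℝ} (ha : 0 ≤ a) (hau : a ≤ u)
    (hud : u ≤ a + d) :
    ENNReal.ofReal a + volume.restrict (Ioo (0 : ℝ) 1) {v | a + v * d < u} * ENNReal.ofReal d
      = ENNReal.ofReal u := by
  rcases (show 0 ≤ d by linarith).eq_or_lt with rfl | hd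
  · rw [le_antisymm hau (by simpa using hud), ENNReal.ofReal_zero, mul_zero, add_zero]
  have hset : {v | a + v * d < u} = Iio ((u - a) / d) := by
    ext v
    simp only [mem_ofPred_eq, mem_Iio, lt_div_iff₀ hd]
    constructor <;> intro <;> linarith
  have hc : 0 ≤ (u - a) / d := div_nonneg (sub_nonneg.2 hau) hd.le
  have hc1 : (u - a) / d ≤ 1 := (div_le_one hd).2 (by linarith)
  rw [hset, uniform_Iio, min_eq_left hc1, mul_comm, ← ENNReal.ofReal_mul hd.le,
    ← ENNReal.ofReal_add ha (mul_nonneg hd.le hc), mul_div_cancel₀ _ hd.ne', add_sub_cancel]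

lemma uniform_setOf_distribTransform_lt_of_cdf_lt {u x : ℝ} (h : cdf μ x < u) :
    volume.restrict (Ioo (0 : ℝ) 1) {v | distribTransform μ (x, v) < u} = 1 := by
  have hsub : Ioo 0 1 ⊆ {v | distribTransform μ (x, v) < u} :=
    fun v hv => (distribTransform_le_cdf hv.2.le).trans_lt h
  rw [Measure.restrict_apply' measurableSet_Ioo, inter_eq_right.2 hsub]
  simp

lemma uniform_setOf_distribTransform_lt_of_le_leftLim {u x : ℝ} (h : u ≤ leftLim (cdf μ) x) :
    volume.restrict (Ioo (0 : ℝ) 1) {v | distribTransform μ (x, v) < u} = 0 := by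
  rw [Measure.restrict_apply' measurableSet_Ioo]
  convert measure_empty (μ := volume)
  exact eq_empty_of_forall_notMem fun v hv =>
    (h.trans (leftLim_cdf_le_distribTransform hv.2.1.le)).not_gt hv.1

lemma leftLim_cdf_quantile_le {u : ℝ} (hu : 0 < u) (hne : ∃ t, u ≤ cdf μ t) :
    leftLim (cdf μ) (quantile μ u) ≤ u := by
  rw [(monotone_cdf μ).leftLim_eq_sSup]
  refine csSup_le (nonempty_Iio.image _) ?_
  rintro _ ⟨t, ht, rfl⟩
  exact le_of_not_ge fun h => (not_le_of_gt ht) ((quantile_le_iff hu hne).2 h)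

lemma uniform_setOf_distribTransform_lt_eq_indicator {u : ℝ} (hu : 0 < u)
    (hne : ∃ t, u ≤ cdf μ t) (x : ℝ) :
    volume.restrict (Ioo (0 : ℝ) 1) {v | distribTransform μ (x, v) < u}
      = (Iio (quantile μ u)).indicator (fun _ => 1) x + ({quantile μ u} : Set ℝ).indicator
        (fun _ => volume.restrict (Ioo (0 : ℝ) 1)
          {v | distribTransform μ (quantile μ u, v) < u}) x := by
  rcases lt_trichotomy x (quantile μ u) with hx | rfl | hx
  · have hFx : cdf μ x < u := lt_of_not_ge fun h => hx.not_ge ((quantile_le_iff hu hne).2 h)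
    simp [uniform_setOf_distribTransform_lt_of_cdf_lt hFx, hx, hx.ne]
  · simp
  · have hFx : u ≤ leftLim (cdf μ) x :=
      (le_cdf_quantile hne).trans ((monotone_cdf μ).le_leftLim hx)
    simp [uniform_setOf_distribTransform_lt_of_le_leftLim hFx, hx.not_gt, hx.ne']

lemma prod_uniform_distribTransform_preimage_Iio [IsProbabilityMeasure μ] (u : ℝ) :
    (μ.prod (volume.restrict (Ioo (0 : ℝ) 1))) (distribTransform μ ⁻¹' Iio u)
      = volume.restrict (Ioo (0 : ℝ) 1) (Iio u) := by
  rw [Measure.prod_apply (measurable_distribTransform measurableSet_Iio), uniform_Iio]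
  change ∫⁻ x, volume.restrict (Ioo (0 : ℝ) 1) {v | distribTransform μ (x, v) < u} ∂μ = _
  rcases le_or_gt u 0 with hu0 | hu0
  · simp_rw [uniform_setOf_distribTransform_lt_of_le_leftLim
      (hu0.trans (leftLim_cdf_nonneg _))]
    rw [lintegral_zero, ENNReal.ofReal_of_nonpos (min_le_of_left_le hu0)]
  by_cases hne : ∃ t, u ≤ cdf μ t
  swap
  · push Not at hne
    have hu1 : 1 ≤ u := not_lt.1 fun h => (exists_le_cdf h).elim fun t ht => (hne t).not_ge ht
    simp_rw [uniform_setOf_distribTransform_lt_of_cdf_lt (hne _)]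
    simp [min_eq_right hu1]
  set x₀ := quantile μ u
  rw [lintegral_congr (uniform_setOf_distribTransform_lt_eq_indicator hu0 hne), lintegral_add_left (measurable_const.indicator measurableSet_Iio),
    lintegral_indicator_const measurableSet_Iio,
    lintegral_indicator_const (measurableSet_singleton _), one_mul,
    measure_Iio_eq_ofReal_leftLim_cdf, measure_singleton_eq_ofReal_cdf_sub,
    min_eq_left ((le_cdf_quantile hne).trans (cdf_le_one μ _))]
  exact ofReal_add_mul_uniform_setOf_add_mul_lt (d := cdf μ x₀ - leftLim (cdf μ) x₀)
    (leftLim_cdf_nonneg _) (leftLim_cdf_quantile_le hu0 hne)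
    (by rw [add_sub_cancel]; exact le_cdf_quantile hne)

theorem map_distribTransform_prod_uniform [IsProbabilityMeasure μ] :
    (μ.prod (volume.restrict (Ioo (0 : ℝ) 1))).map (distribTransform μ)
      = volume.restrict (Ioo (0 : ℝ) 1) := by
  have := Measure.isProbabilityMeasure_map (μ := μ.prod (volume.restrict (Ioo (0 : ℝ) 1)))
    (measurable_distribTransform (μ := μ)).aemeasurable
  refine Measure.ext_of_Ici _ _ fun u => ?_
  rw [← compl_Iio, prob_compl_eq_one_sub measurableSet_Iio, prob_compl_eq_one_sub measurableSet_Iio,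
    Measure.map_apply measurable_distribTransform measurableSet_Iio,
    prod_uniform_distribTransform_preimage_Iio]

theorem quantile_distribTransform_ae_eq [IsProbabilityMeasure μ] :
    quantile μ ∘ distribTransform μ =ᵐ[μ.prod (volume.restrict (Ioo (0 : ℝ) 1))] Prod.fst := by
  have hG := map_distribTransform_prod_uniform (μ := μ)
  have hGm := (measurable_distribTransform (μ := μ)).aemeasurable
    (μ := μ.prod (volume.restrict (Ioo (0 : ℝ) 1)))
  have hq : AEMeasurable (quantile μ)
      ((μ.prod (volume.restrict (Ioo (0 : ℝ) 1))).map (distribTransform μ)) := by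
    rw [hG]; exact aemeasurable_quantile
  refine ae_eq_of_ae_le_of_map_eq (hq.comp_aemeasurable hGm) measurable_fst.aemeasurable ?_ ?_
  · have hGIoo : ∀ᵐ p ∂μ.prod (volume.restrict (Ioo (0 : ℝ) 1)), distribTransform μ p ∈ Ioo 0 1 :=
      ae_of_ae_map hGm (by rw [hG]; exact ae_restrict_mem measurableSet_Ioo)
    have hvIoo : ∀ᵐ p ∂μ.prod (volume.restrict (Ioo (0 : ℝ) 1)), p.2 ∈ Ioo 0 1 :=
      Measure.quasiMeasurePreserving_snd.ae (ae_restrict_mem measurableSet_Ioo)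
    filter_upwards [hGIoo, hvIoo] with p hp hv
    exact (quantile_le_iff_of_mem_Ioo hp).2 (distribTransform_le_cdf hv.2.le)
  · rw [← AEMeasurable.map_map_of_aemeasurable hq hGm, hG, map_quantile_uniform,
      Measure.map_fst_prod, measure_univ, one_smul]

section

variable {ι : Type*} (μ : Measure ℝ) (L : Measure (ι → ℝ))

noncomputable def distribTransformLaw : Measure (ι → ℝ) :=
  (L.prod (volume.restrict (Ioo (0 : ℝ) 1))).map fun q i => distribTransform μ (q.1 i, q.2)

variable {μ L}

lemma measurable_distribTransform_pi :
    Measurable fun q : (ι → ℝ) × ℝ => fun i => distribTransform μ (q.1 i, q.2) :=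
  measurable_pi_lambda _ fun i =>
    measurable_distribTransform.comp
      (((measurable_pi_apply i).comp measurable_fst).prodMk measurable_snd)

variable [IsProbabilityMeasure L]

instance : IsProbabilityMeasure (distribTransformLaw μ L) :=
  Measure.isProbabilityMeasure_map measurable_distribTransform_pi.aemeasurable

lemma map_comp_distribTransformLaw (σ : ι → ι) (hL : L.map (fun x => x ∘ σ) = L) :
    (distribTransformLaw μ L).map (fun y => y ∘ σ) = distribTransformLaw μ L := by
  have hσ : Measurable fun x : ι → ℝ => x ∘ σ :=
    measurable_pi_lambda _ fun i => measurable_pi_apply _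
  rw [distribTransformLaw, Measure.map_map hσ measurable_distribTransform_pi]
  conv_rhs => rw [← hL, ← Measure.map_id (μ := volume.restrict (Ioo (0 : ℝ) 1)),
    Measure.map_prod_map _ _ hσ measurable_id, Measure.map_map measurable_distribTransform_pi
    (hσ.prodMap measurable_id)]
  rfl

lemma map_prodMap_eval (hL : ∀ i, L.map (fun x => x i) = μ) (i : ι) :
    (L.prod (volume.restrict (Ioo (0 : ℝ) 1))).map (Prod.map (fun x : ι → ℝ => x i) id)
      = μ.prod (volume.restrict (Ioo (0 : ℝ) 1)) := by
  rw [← Measure.map_prod_map _ _ (measurable_pi_apply i) measurable_id, hL, Measure.map_id]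

variable [IsProbabilityMeasure μ]

lemma map_eval_distribTransformLaw (hL : ∀ i, L.map (fun x => x i) = μ) (i : ι) :
    (distribTransformLaw μ L).map (fun y => y i) = volume.restrict (Ioo (0 : ℝ) 1) := by
  rw [distribTransformLaw, Measure.map_map (measurable_pi_apply i) measurable_distribTransform_pi]
  change Measure.map (distribTransform μ ∘ Prod.map (fun x : ι → ℝ => x i) id) _ = _
  rw [← Measure.map_map measurable_distribTransform ((measurable_pi_apply i).prodMap measurable_id),
    map_prodMap_eval hL, map_distribTransform_prod_uniform]

variable [Countable ι]

lemma distribTransformLaw_forall_mem_Ioo (hL : ∀ i, L.map (fun x => x i) = μ) :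
    distribTransformLaw μ L {y | ∀ i, y i ∈ Ioo (0 : ℝ) 1} = 1 := by
  have hs : MeasurableSet {y : ι → ℝ | ∀ i, y i ∈ Ioo (0 : ℝ) 1} := by measurability
  rw [← mem_ae_iff_prob_eq_one hs]
  refine ae_all_iff.2 fun i => ae_of_ae_map (measurable_pi_apply i).aemeasurable ?_
  rw [map_eval_distribTransformLaw hL i]
  exact ae_restrict_mem measurableSet_Ioo

lemma map_quantile_distribTransformLaw (hL : ∀ i, L.map (fun x => x i) = μ) :
    (distribTransformLaw μ L).map (fun y i => quantile μ (y i)) = L := by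
  have hq : AEMeasurable (fun y i => quantile μ (y i)) (distribTransformLaw μ L) :=
    aemeasurable_pi_lambda _ fun i => by
      have h := aemeasurable_quantile (μ := μ)
      rw [← map_eval_distribTransformLaw hL i] at h
      exact h.comp_aemeasurable (measurable_pi_apply i).aemeasurable
  have hinv : (fun y i => quantile μ (y i)) ∘ (fun q i => distribTransform μ (q.1 i, q.2))
      =ᵐ[L.prod (volume.restrict (Ioo (0 : ℝ) 1))] Prod.fst := by
    refine (ae_all_iff.2 fun i => ?_).mono fun q hq => funext hq
    have h := quantile_distribTransform_ae_eq (μ := μ)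
    rw [← map_prodMap_eval hL i] at h
    exact ae_of_ae_map ((measurable_pi_apply i).prodMap measurable_id).aemeasurable h
  rw [distribTransformLaw, AEMeasurable.map_map_of_aemeasurable hq
    measurable_distribTransform_pi.aemeasurable, Measure.map_congr hinv, Measure.map_fst_prod,
    measure_univ, one_smul]

end

lemma map_eval_eq_of_map_shift_eq {E : Type*} [MeasurableSpace E] {L : Measure (ℤ → E)}
    (h : L.map (fun x n => x (n + 1)) = L) (n : ℤ) :
    L.map (fun x => x n) = L.map (fun x => x 0) := by
  have hstep : ∀ n : ℤ, L.map (fun x => x (n + 1)) = L.map (fun x => x n) := fun n => by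
    have hshift : Measurable fun (x : ℤ → E) (n : ℤ) => x (n + 1) := by fun_prop
    conv_rhs => rw [← h]
    rw [Measure.map_map (measurable_pi_apply n) hshift]
    rfl
  induction n using Int.induction_on with
  | zero => rfl
  | succ k ih => rw [hstep, ih]
  | pred k ih => rw [← ih, ← hstep, sub_add_cancel]

end ProbabilityTheory

open ProbabilityTheory (cdf_eq_real quantile distribTransformLaw map_eval_eq_of_map_shift_eq
  map_comp_distribTransformLaw distribTransformLaw_forall_mem_Ioo map_eval_distribTransformLaw
  map_quantile_distribTransformLaw)

/-- Main theorem (one-dimensional version): for a strictly stationary real-valued process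
`(X_n)_{n∈ℤ}` with CDF `F`, there is a strictly stationary process with values in `(0,1)`
and uniform one-dimensional marginals — i.e. a shift-invariant probability `μ` on `ℝ^ℤ`
carried by `(0,1)^ℤ` with uniform marginals — whose image under the coordinatewise
generalized inverse `F⁻¹` is the law of `(X_n)`. -/
theorem stationary_process_factor_of_uniform
    (Ω : Type*) [MeasurableSpace Ω] (ℙ : Measure Ω) [IsProbabilityMeasure ℙ]
    (X : ℤ → Ω → ℝ) (hX : ∀ n, Measurable (X n))
    (hstat : (ℙ.map (fun ω => fun n : ℤ => X n ω)).map (fun x => fun n : ℤ => x (n + 1))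
      = ℙ.map (fun ω => fun n : ℤ => X n ω))
    (F : ℝ → ℝ) (hF : ∀ t, F t = ((ℙ.map (X 0)) (Set.Iic t)).toReal)
    (Finv : ℝ → ℝ) (hFinv : ∀ s, Finv s = sInf {t : ℝ | s ≤ F t}) :
    ∃ μ : Measure (ℤ → ℝ), IsProbabilityMeasure μ ∧
      μ.map (fun y => fun n : ℤ => y (n + 1)) = μ ∧
      μ {y | ∀ i : ℤ, y i ∈ Set.Ioo (0 : ℝ) 1} = 1 ∧
      (∀ n : ℤ, μ.map (fun y => y n) = volume.restrict (Set.Ioo (0 : ℝ) 1)) ∧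
      μ.map (fun y => fun n : ℤ => Finv (y n)) = ℙ.map (fun ω => fun n : ℤ => X n ω) := by
  have hXpi : Measurable fun ω n => X n ω := measurable_pi_lambda _ hX
  have : IsProbabilityMeasure (ℙ.map (X 0)) := Measure.isProbabilityMeasure_map (hX 0).aemeasurable
  have : IsProbabilityMeasure (ℙ.map fun ω n => X n ω) :=
    Measure.isProbabilityMeasure_map hXpi.aemeasurable
  have hmarg : ∀ n, (ℙ.map fun ω n => X n ω).map (fun x => x n) = ℙ.map (X 0) := fun n => by
    rw [map_eval_eq_of_map_shift_eq hstat n, Measure.map_map (measurable_pi_apply 0) hXpi]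
    rfl
  obtain rfl : Finv = quantile (ℙ.map (X 0)) := funext fun s => by
    simp only [hFinv, hF, quantile, cdf_eq_real, measureReal_def]
  exact ⟨distribTransformLaw _ _, inferInstance, map_comp_distribTransformLaw (· + 1) hstat,
    distribTransformLaw_forall_mem_Ioo hmarg, map_eval_distribTransformLaw hmarg,
    map_quantile_distribTransformLaw hmarg⟩
end

section
/- Let ν be a weakly mixing shift-invariant measure and μ = ∫ μ_ω dν(ω) the mixture over an equivariant kernel satisfying the fiberwise factorization property (for finitely-coordinate-determined f, g and large k, ∫ f·(g∘S^k) dμ_ω = ∫ f dμ_ω · ∫ g∘S^k dμ_ω). Then μ is weakly mixing: (1/n) Σ_{k<n} |∫ f·(g∘S^k) dμ − ∫f dμ ∫g dμ| → 0 for all bounded measurable f, g. -/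
/-!
For `f, g` depending on finitely many coordinates, the fiberwise factorization and the
equivariance `μ_ω = S_* μ_{Tω}` turn the lag-`k` correlation of `f, g` under the mixture into the
lag-`k` correlation under `ν` of the fiber averages `ω ↦ ∫ g dμ_ω` and `ω ↦ ∫ f dμ_ω`, for all
large `k`; weak mixing of `ν` then gives the Cesàro decay. The mixture is `S`-invariant, so the
correlations are `L¹`-Lipschitz in `f` and `g` uniformly in the lag, and every bounded measurable
function is an `L¹` limit of finitely determined ones with the same bound (Lévy's upward theorem
along the windows `[-N, N]`, followed by truncation).
-/

open MeasureTheory Filter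
open ProbabilityTheory Topology

noncomputable def cesaroMean (a : ℕ → ℝ) (n : ℕ) : ℝ := (1 / (n : ℝ)) * ∑ k ∈ Finset.range n, a k

lemma cesaroMean_mono {a b : ℕ → ℝ} (hab : ∀ k, a k ≤ b k) (n : ℕ) :
    cesaroMean a n ≤ cesaroMean b n :=
  mul_le_mul_of_nonneg_left (Finset.sum_le_sum fun k _ => hab k) (by positivity)

lemma cesaroMean_add_const (a : ℕ → ℝ) (c : ℝ) {n : ℕ} (hn : n ≠ 0) :
    cesaroMean (fun k => a k + c) n = cesaroMean a n + c := by
  simp only [cesaroMean, Finset.sum_add_distrib, Finset.sum_const, Finset.card_range,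
    nsmul_eq_mul]
  field_simp

lemma tendsto_cesaroMean_of_eventuallyEq {a b : ℕ → ℝ} {l : ℝ} (hab : a =ᶠ[atTop] b)
    (hb : Tendsto (cesaroMean b) atTop (𝓝 l)) : Tendsto (cesaroMean a) atTop (𝓝 l) := by
  have hdiff : Tendsto (cesaroMean (a - b)) atTop (𝓝 0) := by
    have : Tendsto (a - b) atTop (𝓝 0) :=
      tendsto_const_nhds.congr' (hab.mono fun k hk => by simp [hk])
    unfold cesaroMean
    simpa only [one_div] using this.cesaro
  have hsplit : cesaroMean a = cesaroMean b + cesaroMean (a - b) := by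
    funext n
    simp only [cesaroMean, Pi.add_apply, Pi.sub_apply, Finset.sum_sub_distrib]
    ring
  rw [hsplit, ← add_zero l]
  exact hb.add hdiff

lemma tendsto_cesaroMean_zero_of_forall_le_add {a : ℕ → ℝ} (ha : ∀ k, 0 ≤ a k)
    (h : ∀ ε > 0, ∃ b : ℕ → ℝ, Tendsto (cesaroMean b) atTop (𝓝 0) ∧ ∀ k, a k ≤ b k + ε) :
    Tendsto (cesaroMean a) atTop (𝓝 0) := by
  refine tendsto_order.2 ⟨fun c hc => Eventually.of_forall fun n => hc.trans_le ?_, fun c hc => ?_⟩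
  · exact mul_nonneg (by positivity) (Finset.sum_nonneg fun k _ => ha k)
  obtain ⟨b, hb, hab⟩ := h (c / 2) (half_pos hc)
  filter_upwards [hb.eventually (gt_mem_nhds (half_pos hc)), eventually_ne_atTop 0] with n hbn hn
  calc cesaroMean a n ≤ cesaroMean (fun k => b k + c / 2) n := cesaroMean_mono hab n
    _ = cesaroMean b n + c / 2 := cesaroMean_add_const b _ hn
    _ < c := by linarith

lemma abs_mul_sub_mul_le {a b a' b' C : ℝ} (hb : |b| ≤ C) (ha' : |a'| ≤ C) :
    |a * b - a' * b'| ≤ C * |a - a'| + C * |b - b'| := by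
  calc |a * b - a' * b'| = |(a - a') * b + a' * (b - b')| := by ring_nf
    _ ≤ |a - a'| * |b| + |a'| * |b - b'| := by
        rw [← abs_mul, ← abs_mul]; exact abs_add_le _ _
    _ ≤ C * |a - a'| + C * |b - b'| := by
        rw [mul_comm C]; gcongr

lemma abs_clamp_sub_le {a b C : ℝ} (hb : |b| ≤ C) : |max (-C) (min C a) - b| ≤ |a - b| := by
  obtain ⟨hb₁, hb₂⟩ := abs_le.1 hb
  have h₁ := le_abs_self (a - b)
  have h₂ := neg_abs_le (a - b)
  rw [abs_le]
  rcases max_cases (-C) (min C a) with ⟨hmax, _⟩ | ⟨hmax, _⟩ <;>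
    rcases min_cases C a with ⟨hmin, _⟩ | ⟨hmin, _⟩ <;>
    constructor <;> linarith

section Correlation

variable {X : Type*} [MeasurableSpace X] {μ : Measure X}

noncomputable def correlation (μ : Measure X) (S : X → X) (f g : X → ℝ) (k : ℕ) : ℝ :=
  ∫ x, f x * g (S^[k] x) ∂μ - (∫ x, f x ∂μ) * ∫ x, g x ∂μ

lemma integrable_of_abs_le [IsFiniteMeasure μ] {f : X → ℝ} (hf : Measurable f) {C : ℝ}
    (hC : ∀ x, |f x| ≤ C) : Integrable f μ :=
  .of_bound hf.aestronglyMeasurable C (ae_of_all _ fun x => (Real.norm_eq_abs _).trans_le (hC x))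

lemma integrable_mul_comp_of_abs_le [IsFiniteMeasure μ] {u v : X → ℝ} {φ : X → X} {C : ℝ}
    (hu : Measurable u) (hv : Measurable v) (hφ : Measurable φ) (huC : ∀ x, |u x| ≤ C)
    (hvC : ∀ x, |v x| ≤ C) : Integrable (fun x => u x * v (φ x)) μ :=
  integrable_of_abs_le (hu.mul (hv.comp hφ)) (C := C * C) fun x => by
    rw [abs_mul]
    exact mul_le_mul (huC x) (hvC _) (abs_nonneg _) ((abs_nonneg _).trans (huC x))

lemma abs_integral_le_of_abs_le [IsProbabilityMeasure μ] {f : X → ℝ} {C : ℝ}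
    (hC : ∀ x, |f x| ≤ C) : |∫ x, f x ∂μ| ≤ C := by
  simpa using norm_integral_le_of_norm_le_const (μ := μ)
    (ae_of_all _ fun x => (Real.norm_eq_abs (f x)).trans_le (hC x))

lemma abs_integral_sub_le {f f' : X → ℝ} (hf : Integrable f μ) (hf' : Integrable f' μ) :
    |∫ x, f x ∂μ - ∫ x, f' x ∂μ| ≤ ∫ x, |f x - f' x| ∂μ := by
  rw [← integral_sub hf hf']
  exact abs_integral_le_integral_abs

lemma MeasureTheory.MeasurePreserving.integral_comp_of_aestronglyMeasurable {Y : Type*}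
    [MeasurableSpace Y] {ν : Measure Y} {T : X → Y} (hT : MeasurePreserving T μ ν) {g : Y → ℝ}
    (hg : AEStronglyMeasurable g ν) : ∫ x, g (T x) ∂μ = ∫ y, g y ∂ν := by
  rw [← integral_map hT.aemeasurable (hT.map_eq.symm ▸ hg), hT.map_eq]

lemma abs_correlation_sub_le [IsProbabilityMeasure μ] {S : X → X} (hS : MeasurePreserving S μ μ)
    {f g f' g' : X → ℝ} {C : ℝ}
    (hf : Measurable f) (hg : Measurable g) (hf' : Measurable f') (hg' : Measurable g')
    (hfC : ∀ x, |f x| ≤ C) (hgC : ∀ x, |g x| ≤ C) (hf'C : ∀ x, |f' x| ≤ C)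
    (hg'C : ∀ x, |g' x| ≤ C) (k : ℕ) :
    |correlation μ S f g k - correlation μ S f' g' k| ≤
      2 * C * (∫ x, |f x - f' x| ∂μ + ∫ x, |g x - g' x| ∂μ) := by
  have hSk := (hS.iterate k).measurable
  have hC : 0 ≤ C := (abs_nonneg _).trans (abs_integral_le_of_abs_le (μ := μ) hgC)
  have hdf : Integrable (fun x => |f x - f' x|) μ :=
    ((integrable_of_abs_le hf hfC).sub (integrable_of_abs_le hf' hf'C)).abs
  have hdg : Integrable (fun x => |g x - g' x|) μ :=
    ((integrable_of_abs_le hg hgC).sub (integrable_of_abs_le hg' hg'C)).abs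
  have hdgS : Integrable (fun x => |g (S^[k] x) - g' (S^[k] x)|) μ :=
    ((integrable_of_abs_le (hg.comp hSk) fun x => hgC _).sub
      (integrable_of_abs_le (hg'.comp hSk) fun x => hg'C _)).abs
  have hdgS_eq : ∫ x, |g (S^[k] x) - g' (S^[k] x)| ∂μ = ∫ x, |g x - g' x| ∂μ :=
    (hS.iterate k).integral_comp_of_aestronglyMeasurable hdg.aestronglyMeasurable
  have hjoint : |∫ x, f x * g (S^[k] x) ∂μ - ∫ x, f' x * g' (S^[k] x) ∂μ| ≤
      C * ∫ x, |f x - f' x| ∂μ + C * ∫ x, |g x - g' x| ∂μ := by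
    rw [← hdgS_eq, ← integral_const_mul, ← integral_const_mul,
      ← integral_add (hdf.const_mul C) (hdgS.const_mul C)]
    refine (abs_integral_sub_le (integrable_mul_comp_of_abs_le hf hg hSk hfC hgC)
      (integrable_mul_comp_of_abs_le hf' hg' hSk hf'C hg'C)).trans
      (integral_mono_of_nonneg (ae_of_all _ fun x => abs_nonneg _)
        ((hdf.const_mul C).add (hdgS.const_mul C)) (ae_of_all _ fun x => ?_))
    exact abs_mul_sub_mul_le (hgC _) (hf'C x)
  have hmarg : |(∫ x, f x ∂μ) * ∫ x, g x ∂μ - (∫ x, f' x ∂μ) * ∫ x, g' x ∂μ| ≤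
      C * ∫ x, |f x - f' x| ∂μ + C * ∫ x, |g x - g' x| ∂μ :=
    (abs_mul_sub_mul_le (abs_integral_le_of_abs_le hgC) (abs_integral_le_of_abs_le hf'C)).trans
      (add_le_add
        (mul_le_mul_of_nonneg_left (abs_integral_sub_le (integrable_of_abs_le hf hfC)
          (integrable_of_abs_le hf' hf'C)) hC)
        (mul_le_mul_of_nonneg_left (abs_integral_sub_le (integrable_of_abs_le hg hgC)
          (integrable_of_abs_le hg' hg'C)) hC))
  unfold correlation
  rw [abs_sub_le_iff] at hjoint hmarg ⊢
  constructor <;> linarith [hjoint.1, hjoint.2, hmarg.1, hmarg.2]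

theorem tendsto_cesaroMean_correlation_of_dense [IsProbabilityMeasure μ] {S : X → X}
    (hS : MeasurePreserving S μ μ)
    (P : (X → ℝ) → Prop)
    (hP : ∀ f g C, P f → P g → Measurable f → Measurable g → (∀ x, |f x| ≤ C) →
      (∀ x, |g x| ≤ C) → Tendsto (cesaroMean fun k => |correlation μ S f g k|) atTop (𝓝 0))
    (hdense : ∀ f C, Measurable f → (∀ x, |f x| ≤ C) → ∀ ε > 0, ∃ f', P f' ∧ Measurable f' ∧
      (∀ x, |f' x| ≤ C) ∧ ∫ x, |f x - f' x| ∂μ < ε)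
    {f g : X → ℝ} {C : ℝ} (hf : Measurable f) (hg : Measurable g) (hfC : ∀ x, |f x| ≤ C)
    (hgC : ∀ x, |g x| ≤ C) :
    Tendsto (cesaroMean fun k => |correlation μ S f g k|) atTop (𝓝 0) := by
  refine tendsto_cesaroMean_zero_of_forall_le_add (fun k => abs_nonneg _) fun ε hε => ?_
  have hC : 0 ≤ C := (abs_nonneg _).trans (abs_integral_le_of_abs_le (μ := μ) hgC)
  let δ := ε / (4 * C + 1)
  have hδ : 0 < δ := by positivity
  obtain ⟨f', hPf', hf', hf'C, hff'⟩ := hdense f C hf hfC δ hδ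
  obtain ⟨g', hPg', hg', hg'C, hgg'⟩ := hdense g C hg hgC δ hδ
  refine ⟨fun k => |correlation μ S f' g' k|, hP f' g' C hPf' hPg' hf' hg' hf'C hg'C,
    fun k => ?_⟩
  have hclose := abs_correlation_sub_le hS hf hg hf' hg' hfC hgC hf'C hg'C k
  have herr : 2 * C * (∫ x, |f x - f' x| ∂μ + ∫ x, |g x - g' x| ∂μ) ≤ ε := by
    calc 2 * C * (∫ x, |f x - f' x| ∂μ + ∫ x, |g x - g' x| ∂μ) ≤ 2 * C * (δ + δ) := by
          gcongr
      _ ≤ ε := by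
          rw [show 2 * C * (δ + δ) = ε * (4 * C) / (4 * C + 1) by ring]
          rw [div_le_iff₀ (by positivity)]
          nlinarith
  linarith [abs_sub_abs_le_abs_sub (correlation μ S f g k) (correlation μ S f' g' k)]

end Correlation

section Window

variable {E : Type*} [MeasurableSpace E]

noncomputable def windowFiltration :
    Filtration ℕ (MeasurableSpace.pi : MeasurableSpace (ℤ → E)) where
  seq N := Filtration.piFinset (Finset.Icc (-(N : ℤ)) N)
  mono' _ _ hNM := Filtration.piFinset.mono (Finset.Icc_subset_Icc (by omega) (by omega))
  le' N := Filtration.piFinset.le _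

lemma iSup_windowFiltration : ⨆ N, windowFiltration (E := E) N = MeasurableSpace.pi := by
  refine le_antisymm (iSup_le windowFiltration.le) (iSup_le fun i => ?_)
  let s := Finset.Icc (-(i.natAbs : ℤ)) i.natAbs
  have hi : i ∈ s := by rw [Finset.mem_Icc, ← abs_le, Int.abs_eq_natAbs]
  refine le_trans ?_ (le_iSup _ i.natAbs)
  rw [← measurable_iff_comap_le]
  change Measurable[MeasurableSpace.comap (s.restrict (π := fun _ => E)) MeasurableSpace.pi]
    ((fun v => v ⟨i, hi⟩) ∘ s.restrict)
  exact (measurable_pi_apply _).comp (comap_measurable _)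

lemma dependsOn_of_stronglyMeasurable_windowFiltration {f : (ℤ → E) → ℝ} {N : ℕ}
    (hf : StronglyMeasurable[windowFiltration N] f) : DependsOn f {i | |i| ≤ (N : ℤ)} := by
  have := hf.dependsOn_of_piFinset
  rwa [Finset.coe_Icc, show Set.Icc (-(N : ℤ)) N = {i | |i| ≤ (N : ℤ)} by ext; simp [abs_le]]
    at this

theorem exists_dependsOn_window_integral_abs_sub_lt {μ : Measure (ℤ → E)} [IsFiniteMeasure μ]
    {f : (ℤ → E) → ℝ} {C : ℝ} (hf : Measurable f) (hfC : ∀ x, |f x| ≤ C) {ε : ℝ} (hε : 0 < ε) :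
    ∃ f', (∃ N : ℕ, DependsOn f' {i | |i| ≤ (N : ℤ)}) ∧ Measurable f' ∧ (∀ x, |f' x| ≤ C) ∧
      ∫ x, |f x - f' x| ∂μ < ε := by
  have hfi := integrable_of_abs_le (μ := μ) hf hfC
  have hlevy := hfi.tendsto_eLpNorm_condExp (ℱ := windowFiltration)
    (by rw [iSup_windowFiltration]; exact hf.stronglyMeasurable)
  obtain ⟨N, hN⟩ := (hlevy.eventually_lt_const (ENNReal.ofReal_pos.2 hε)).exists
  set h := μ[f | windowFiltration N]
  have hh : StronglyMeasurable[windowFiltration N] h := stronglyMeasurable_condExp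
  refine ⟨fun x => max (-C) (min C (h x)), ⟨N, ?_⟩, ?_, fun x => ?_, ?_⟩
  · intro x y hxy
    simp only [dependsOn_of_stronglyMeasurable_windowFiltration hh hxy]
  · exact measurable_const.max (measurable_const.min (hh.mono (windowFiltration.le N)).measurable)
  · have hC : 0 ≤ C := (abs_nonneg _).trans (hfC x)
    exact abs_le.2 ⟨le_max_left _ _, max_le (by linarith) (min_le_left _ _)⟩
  · have hdiff : Integrable (h - f) μ := integrable_condExp.sub hfi
    calc ∫ x, |f x - max (-C) (min C (h x))| ∂μ ≤ ∫ x, ‖(h - f) x‖ ∂μ :=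
          integral_mono_of_nonneg (ae_of_all _ fun x => abs_nonneg _) hdiff.norm
            (ae_of_all _ fun x => by
              change |f x - _| ≤ |h x - f x|
              rw [abs_sub_comm (f x)]
              exact abs_clamp_sub_le (hfC x))
      _ = (eLpNorm (h - f) 1 μ).toReal := by
          rw [eLpNorm_one_eq_lintegral_enorm, integral_norm_eq_lintegral_enorm
            hdiff.aestronglyMeasurable]
      _ < ε := ENNReal.toReal_lt_of_lt_ofReal hN

end Window

section Mixture

variable {Ω X : Type*} [MeasurableSpace X]

lemma MeasureTheory.Measure.eq_map_of_forall_integral_eq {Y : Type*} [MeasurableSpace Y]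
    {μ : Measure Y} {μ' : Measure X} [IsFiniteMeasure μ] [IsFiniteMeasure μ'] {S : X → Y}
    (hS : Measurable S)
    (h : ∀ g : Y → ℝ, Measurable g → (∃ C : ℝ, ∀ y, |g y| ≤ C) →
      ∫ y, g y ∂μ = ∫ x, g (S x) ∂μ') :
    μ = μ'.map S := by
  ext s hs
  have hind := h (s.indicator 1) (measurable_one.indicator hs)
    ⟨1, fun y => by by_cases hy : y ∈ s <;> simp [hy]⟩
  rw [← integral_map hS.aemeasurable (measurable_one.indicator hs).aestronglyMeasurable,
    integral_indicator_one hs, integral_indicator_one hs] at hind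
  exact (ENNReal.toReal_eq_toReal_iff' (measure_ne_top _ _) (measure_ne_top _ _)).1 hind

lemma map_iterate_eq_of_forall_eq_map {κ : Ω → Measure X} {T : Ω → Ω} {S : X → X}
    (hS : Measurable S) (hκ : ∀ ω, κ ω = (κ (T ω)).map S) (k : ℕ) (ω : Ω) :
    κ ω = (κ (T^[k] ω)).map S^[k] := by
  induction k with
  | zero => simp
  | succ k ih =>
    rw [ih, hκ (T^[k] ω), Measure.map_map (hS.iterate k) hS, ← Function.iterate_succ_apply' T,
      ← Function.iterate_succ]

variable [MeasurableSpace Ω] {ν : Measure Ω} {K : Kernel Ω X} {T : Ω → Ω} {S : X → X}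

lemma MeasureTheory.Measure.integral_bind_kernel {f : X → ℝ} (hf : Integrable f (ν.bind K)) :
    ∫ x, f x ∂(ν.bind K) = ∫ ω, ∫ x, f x ∂K ω ∂ν := by
  rw [Measure.comp_eq_comp_const_apply] at hf ⊢
  rw [Kernel.integral_comp hf]
  rfl

lemma measurePreserving_bind (hT : MeasurePreserving T ν ν) (hS : Measurable S)
    (hK : ∀ ω, K ω = (K (T ω)).map S) : MeasurePreserving S (ν.bind K) (ν.bind K) := by
  refine ⟨hS, Measure.ext fun s hs => ?_⟩
  rw [Measure.map_apply hS hs, Measure.bind_apply (hS hs) K.aemeasurable,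
    Measure.bind_apply hs K.aemeasurable]
  calc ∫⁻ ω, K ω (S ⁻¹' s) ∂ν = ∫⁻ ω, K ω (S ⁻¹' s) ∂(ν.map T) := by rw [hT.map_eq]
    _ = ∫⁻ ω, K (T ω) (S ⁻¹' s) ∂ν := lintegral_map (K.measurable_coe (hS hs)) hT.measurable
    _ = ∫⁻ ω, K ω s ∂ν := lintegral_congr fun ω => by rw [hK ω, Measure.map_apply hS hs]

lemma correlation_bind_eq [IsProbabilityMeasure ν] [IsMarkovKernel K]
    (hT : MeasurePreserving T ν ν) (hS : Measurable S) (hK : ∀ ω, K ω = (K (T ω)).map S)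
    {f g : X → ℝ} {C : ℝ} (hf : Measurable f) (hg : Measurable g) (hfC : ∀ x, |f x| ≤ C)
    (hgC : ∀ x, |g x| ≤ C) {k : ℕ}
    (hfactor : ∀ ω, ∫ x, f x * g (S^[k] x) ∂K ω = (∫ x, f x ∂K ω) * ∫ x, g (S^[k] x) ∂K ω) :
    correlation (ν.bind K) S f g k =
      correlation ν T (fun ω => ∫ x, g x ∂K ω) (fun ω => ∫ x, f x ∂K ω) k := by
  have hSk := hS.iterate k
  have hfg : Integrable (fun x => f x * g (S^[k] x)) (ν.bind K) :=
    integrable_mul_comp_of_abs_le hf hg hSk hfC hgC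
  have hF := hf.stronglyMeasurable.integral_kernel (κ := K)
  have hH := (hg.comp hSk).stronglyMeasurable.integral_kernel (κ := K)
  have hshift : ∀ ω, ∫ x, g (S^[k] x) ∂K (T^[k] ω) = ∫ x, g x ∂K ω := fun ω => by
    rw [map_iterate_eq_of_forall_eq_map hS hK k ω,
      integral_map hSk.aemeasurable hg.aestronglyMeasurable]
  have hjoint : ∫ ω, (∫ x, f x ∂K ω) * ∫ x, g (S^[k] x) ∂K ω ∂ν =
      ∫ ω, (∫ x, g x ∂K ω) * ∫ x, f x ∂K (T^[k] ω) ∂ν := by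
    have := (hT.iterate k).integral_comp_of_aestronglyMeasurable (hF.mul hH).aestronglyMeasurable
    simp only [Pi.mul_apply, Function.comp_apply, hshift] at this
    simp_rw [← this, mul_comm]
  unfold correlation
  rw [Measure.integral_bind_kernel hfg, Measure.integral_bind_kernel (integrable_of_abs_le hf hfC),
    Measure.integral_bind_kernel (integrable_of_abs_le hg hgC), mul_comm (∫ ω, ∫ x, f x ∂K ω ∂ν)]
  simp_rw [hfactor, hjoint]

end Mixture

theorem mixture_weakly_mixing_general
    (d : ℕ)
    (ν : Measure (ℤ → (Fin d → ℝ))) [IsProbabilityMeasure ν]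
    (T : (ℤ → (Fin d → ℝ)) → (ℤ → (Fin d → ℝ))) (hT : ∀ x n, T x n = x (n + 1))
    (S : (ℤ → (Fin d → Set.Ioo (0:ℝ) 1)) → (ℤ → (Fin d → Set.Ioo (0:ℝ) 1)))
    (hSmeas : Measurable S)
    (hinv : ν.map T = ν)
    (hwm : ∀ (F G : (ℤ → (Fin d → ℝ)) → ℝ), Measurable F → Measurable G →
      (∃ C : ℝ, ∀ x, |F x| ≤ C) → (∃ C : ℝ, ∀ x, |G x| ≤ C) →
      Tendsto (fun n : ℕ => (1 / (n : ℝ)) * ∑ k ∈ Finset.range n,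
          |∫ x, F x * G (T^[k] x) ∂ν - (∫ x, F x ∂ν) * ∫ x, G x ∂ν|)
        atTop (nhds 0))
    (κ : (ℤ → (Fin d → ℝ)) → Measure (ℤ → (Fin d → Set.Ioo (0:ℝ) 1)))
    (hprob : ∀ ω, IsProbabilityMeasure (κ ω))
    (hmeas : ∀ s : Set (ℤ → (Fin d → Set.Ioo (0:ℝ) 1)), MeasurableSet s →
      Measurable (fun ω => κ ω s))
    (hequiv : ∀ ω (h : (ℤ → (Fin d → Set.Ioo (0:ℝ) 1)) → ℝ), Measurable h →
      (∃ C : ℝ, ∀ z, |h z| ≤ C) →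
      ∫ z, h z ∂(κ ω) = ∫ z, h (S z) ∂(κ (T ω)))
    (hfact : ∀ (f g : (ℤ → (Fin d → Set.Ioo (0:ℝ) 1)) → ℝ),
      Measurable f → Measurable g →
      (∃ C : ℝ, ∀ z, |f z| ≤ C) → (∃ C : ℝ, ∀ z, |g z| ≤ C) →
      (∃ N : ℕ, ∀ x y, (∀ i : ℤ, |i| ≤ (N : ℤ) → x i = y i) → f x = f y) →
      (∃ N : ℕ, ∀ x y, (∀ i : ℤ, |i| ≤ (N : ℤ) → x i = y i) → g x = g y) →
      ∃ K : ℕ, ∀ k ≥ K, ∀ ω,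
        ∫ z, f z * g (S^[k] z) ∂(κ ω) =
          (∫ z, f z ∂(κ ω)) * (∫ z, g (S^[k] z) ∂(κ ω))) :
    ∀ (f g : (ℤ → (Fin d → Set.Ioo (0:ℝ) 1)) → ℝ),
      Measurable f → Measurable g →
      (∃ C : ℝ, ∀ z, |f z| ≤ C) → (∃ C : ℝ, ∀ z, |g z| ≤ C) →
      Tendsto (fun n : ℕ => (1 / (n : ℝ)) * ∑ k ∈ Finset.range n,
          |∫ z, f z * g (S^[k] z) ∂(ν.bind κ) -
            (∫ z, f z ∂(ν.bind κ)) * ∫ z, g z ∂(ν.bind κ)|)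
        atTop (nhds 0) := by
  rintro f g hf hg ⟨Cf, hfC⟩ ⟨Cg, hgC⟩
  have hTmeas : Measurable T := measurable_pi_lambda _ fun n => by
    simp only [hT]
    exact measurable_pi_apply _
  let K : Kernel _ _ := ⟨κ, Measure.measurable_of_measurable_coe κ hmeas⟩
  have : IsMarkovKernel K := ⟨hprob⟩
  have hν : MeasurePreserving T ν ν := ⟨hTmeas, hinv⟩
  have hK : ∀ ω, K ω = (K (T ω)).map S := fun ω =>
    Measure.eq_map_of_forall_integral_eq hSmeas (hequiv ω)
  have hwindow : ∀ f g C, (∃ N : ℕ, DependsOn f {i | |i| ≤ (N : ℤ)}) →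
      (∃ N : ℕ, DependsOn g {i | |i| ≤ (N : ℤ)}) → Measurable f → Measurable g →
      (∀ x, |f x| ≤ C) → (∀ x, |g x| ≤ C) →
      Tendsto (cesaroMean fun k => |correlation (ν.bind K) S f g k|) atTop (𝓝 0) := by
    intro f g C hfN hgN hf hg hfC hgC
    obtain ⟨k₀, hk₀⟩ := hfact f g hf hg ⟨C, hfC⟩ ⟨C, hgC⟩ hfN hgN
    refine tendsto_cesaroMean_of_eventuallyEq
      (b := fun k => |correlation ν T (fun ω => ∫ x, g x ∂K ω) (fun ω => ∫ x, f x ∂K ω) k|) ?_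
      (hwm (fun ω => ∫ x, g x ∂K ω) (fun ω => ∫ x, f x ∂K ω)
        hg.stronglyMeasurable.integral_kernel.measurable
        hf.stronglyMeasurable.integral_kernel.measurable
        ⟨C, fun ω => abs_integral_le_of_abs_le hgC⟩ ⟨C, fun ω => abs_integral_le_of_abs_le hfC⟩)
    filter_upwards [eventually_ge_atTop k₀] with k hk
    rw [correlation_bind_eq hν hSmeas hK hf hg hfC hgC (hk₀ k hk ·)]
  exact tendsto_cesaroMean_correlation_of_dense (measurePreserving_bind hν hSmeas hK) _ hwindow
    (fun f C hf hfC ε hε => exists_dependsOn_window_integral_abs_sub_lt hf hfC hε) hf hg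
    (fun x => (hfC x).trans (le_max_left Cf Cg)) (fun x => (hgC x).trans (le_max_right Cf Cg))

/-- If `ν` is weakly mixing and the equivariant kernel satisfies the fiberwise
factorization property for functions depending on finitely many coordinates, then the
mixture measure `μ = ν.bind κ` is weakly mixing:
`(1/n) Σ_{k<n} |∫ f·(g∘S^k) dμ − ∫f dμ ∫g dμ| → 0` for all bounded measurable `f, g`. -/
theorem mixture_weakly_mixing
    (d : ℕ)
    (ν : Measure (ℤ → (Fin d → ℝ))) [IsProbabilityMeasure ν]
    (T : (ℤ → (Fin d → ℝ)) → (ℤ → (Fin d → ℝ))) (hT : ∀ x n, T x n = x (n + 1))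
    (S : (ℤ → (Fin d → Set.Ioo (0:ℝ) 1)) → (ℤ → (Fin d → Set.Ioo (0:ℝ) 1)))
    (hS : ∀ y n, S y n = y (n + 1)) (hSmeas : Measurable S)
    (hinv : ν.map T = ν)
    (hwm : ∀ (F G : (ℤ → (Fin d → ℝ)) → ℝ), Measurable F → Measurable G →
      (∃ C : ℝ, ∀ x, |F x| ≤ C) → (∃ C : ℝ, ∀ x, |G x| ≤ C) →
      Tendsto (fun n : ℕ => (1 / (n : ℝ)) * ∑ k ∈ Finset.range n,
          |∫ x, F x * G (T^[k] x) ∂ν - (∫ x, F x ∂ν) * ∫ x, G x ∂ν|)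
        atTop (nhds 0))
    (κ : (ℤ → (Fin d → ℝ)) → Measure (ℤ → (Fin d → Set.Ioo (0:ℝ) 1)))
    (hprob : ∀ ω, IsProbabilityMeasure (κ ω))
    (hmeas : ∀ s : Set (ℤ → (Fin d → Set.Ioo (0:ℝ) 1)), MeasurableSet s →
      Measurable (fun ω => κ ω s))
    (hequiv : ∀ ω (h : (ℤ → (Fin d → Set.Ioo (0:ℝ) 1)) → ℝ), Measurable h →
      (∃ C : ℝ, ∀ z, |h z| ≤ C) →
      ∫ z, h z ∂(κ ω) = ∫ z, h (S z) ∂(κ (T ω)))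
    (hfact : ∀ (f g : (ℤ → (Fin d → Set.Ioo (0:ℝ) 1)) → ℝ),
      Measurable f → Measurable g →
      (∃ C : ℝ, ∀ z, |f z| ≤ C) → (∃ C : ℝ, ∀ z, |g z| ≤ C) →
      (∃ N : ℕ, ∀ x y, (∀ i : ℤ, |i| ≤ (N : ℤ) → x i = y i) → f x = f y) →
      (∃ N : ℕ, ∀ x y, (∀ i : ℤ, |i| ≤ (N : ℤ) → x i = y i) → g x = g y) →
      ∃ K : ℕ, ∀ k ≥ K, ∀ ω,
        ∫ z, f z * g (S^[k] z) ∂(κ ω) =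
          (∫ z, f z ∂(κ ω)) * (∫ z, g (S^[k] z) ∂(κ ω))) :
    ∀ (f g : (ℤ → (Fin d → Set.Ioo (0:ℝ) 1)) → ℝ),
      Measurable f → Measurable g →
      (∃ C : ℝ, ∀ z, |f z| ≤ C) → (∃ C : ℝ, ∀ z, |g z| ≤ C) →
      Tendsto (fun n : ℕ => (1 / (n : ℝ)) * ∑ k ∈ Finset.range n,
          |∫ z, f z * g (S^[k] z) ∂(ν.bind κ) -
            (∫ z, f z ∂(ν.bind κ)) * ∫ z, g z ∂(ν.bind κ)|)
        atTop (nhds 0) :=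
  mixture_weakly_mixing_general d ν T hT S hSmeas hinv hwm κ hprob hmeas hequiv hfact
end
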